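/- arXiv:2112.14547 — 9 statements merged into one kernel-verified Lean document; each statement's English description precedes it below -/
import Mathlib

section
/- Let q be a prime power, r and d positive integers with d dividing q-1, and h ∈ F_q[x]. Then f(x) = x^r · h(x^((q-1)/d)) is a permutation polynomial of F_q if and only if (1) gcd(r, (q-1)/d) = 1 and (2) the map x ↦ x^r · h(x)^((q-1)/d) is a bijection of the subgroup μ_d of d-th roots of unity in F_q. -/
theorem stmt_0 (p k r d : ℕ) (hp : p.Prime) (hk : 0 < k) (hr : 0 < r) (hd : 0 < d)
    (F : Type*) [Field F] [Fintype F] (hF : Fintype.card F = p ^ k)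
    (hdvd : d ∣ p ^ k - 1) (h : Polynomial F) :
    Function.Bijective (fun x : F => x ^ r * h.eval (x ^ ((p ^ k - 1) / d))) ↔
      (Nat.gcd r ((p ^ k - 1) / d) = 1 ∧
        Set.BijOn (fun x : F => x ^ r * (h.eval x) ^ ((p ^ k - 1) / d))
          {x : F | x ^ d = 1} {x : F | x ^ d = 1}) := by
  classical
  set q := p ^ k with hq
  set s := (q - 1) / d with hs
  set f : F → F := fun x => x ^ r * h.eval (x ^ s) with hf
  set g : F → F := fun x => x ^ r * (h.eval x) ^ s with hgdef
  have hq2 : 2 ≤ q := Nat.one_lt_pow hk.ne' hp.one_lt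
  have hq1 : 0 < q - 1 := by omega
  have hsd : s * d = q - 1 := Nat.div_mul_cancel hdvd
  have hs0 : 0 < s := Nat.div_pos (Nat.le_of_dvd hq1 hdvd) hd
  have hpow1 : ∀ x : F, x ≠ 0 → x ^ (q - 1) = 1 := fun x hx => by
    rw [← hF]; exact FiniteField.pow_card_sub_one_eq_one x hx
  have hmu_ne : ∀ y : F, y ^ d = 1 → y ≠ 0 := by
    intro y hy hy0
    rw [hy0, zero_pow hd.ne'] at hy
    exact zero_ne_one hy
  -- generator of units
  obtain ⟨G, hG⟩ := IsCyclic.exists_generator (α := Fˣ)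
  have hordG : orderOf G = q - 1 := by
    rw [orderOf_eq_card_of_forall_mem_zpowers hG, Nat.card_eq_fintype_card,
      Fintype.card_units, hF]
  -- lemma B : surjectivity of s-th power onto μ_d
  have hsurjs : ∀ y : F, y ^ d = 1 → ∃ x : F, x ≠ 0 ∧ x ^ s = y := by
    intro y hy
    have hy0 : y ≠ 0 := hmu_ne y hy
    obtain ⟨n, hn⟩ := hG (Units.mk0 y hy0)
    have hud : (Units.mk0 y hy0) ^ d = 1 := by
      ext; push_cast; exact hy
    simp only at hn
    have hdvd1 : ((q - 1 : ℕ) : ℤ) ∣ n * d := by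
      rw [← hordG, orderOf_dvd_iff_zpow_eq_one, zpow_mul, hn]
      exact_mod_cast hud
    have hdvd2 : (s : ℤ) ∣ n := by
      have h2 : ((s : ℤ) * d) ∣ n * d := by
        have h3 : ((s * d : ℕ) : ℤ) ∣ n * d := by rw [hsd]; exact hdvd1
        exact_mod_cast h3
      exact (mul_dvd_mul_iff_right (by exact_mod_cast hd.ne' : (d : ℤ) ≠ 0)).mp h2
    obtain ⟨t, ht⟩ := hdvd2
    refine ⟨((G ^ t : Fˣ) : F), Units.ne_zero _, ?_⟩
    have : ((G ^ t) ^ (s : ℕ) : Fˣ) = Units.mk0 y hy0 := by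
      rw [← hn, ht, ← zpow_natCast (G ^ t), ← zpow_mul]
      ring_nf
    calc ((G ^ t : Fˣ) : F) ^ s = (((G ^ t) ^ (s : ℕ) : Fˣ) : F) := by push_cast; ring
      _ = y := by rw [this]; rfl
  -- lemma C : injectivity from coprime exponents
  have hinjC : ∀ x y : F, x ≠ 0 → y ≠ 0 → Nat.gcd r s = 1 →
      x ^ r = y ^ r → x ^ s = y ^ s → x = y := by
    intro x y hx hy hgcd hxr hxs
    have hu : (x * y⁻¹) ^ r = 1 := by
      rw [mul_pow, inv_pow, hxr, mul_inv_cancel₀ (pow_ne_zero _ hy)]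
    have hv : (x * y⁻¹) ^ s = 1 := by
      rw [mul_pow, inv_pow, hxs, mul_inv_cancel₀ (pow_ne_zero _ hy)]
    have h1 : orderOf (x * y⁻¹) ∣ Nat.gcd r s :=
      Nat.dvd_gcd (orderOf_dvd_iff_pow_eq_one.mpr hu) (orderOf_dvd_iff_pow_eq_one.mpr hv)
    rw [hgcd, Nat.dvd_one, orderOf_eq_one_iff] at h1
    field_simp at h1
    exact h1
  have hf0 : f 0 = 0 := by
    simp [hf, zero_pow hr.ne']
  have hfpow : ∀ x : F, (f x) ^ s = g (x ^ s) := by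
    intro x
    simp only [hf, hgdef, mul_pow, ← pow_mul]
    rw [mul_comm r s, pow_mul]
  have hmem : ∀ x : F, x ≠ 0 → (x ^ s) ^ d = 1 := by
    intro x hx
    rw [← pow_mul, hsd]; exact hpow1 x hx
  constructor
  · -- forward
    intro hbij
    have hfne : ∀ x : F, x ≠ 0 → f x ≠ 0 := by
      intro x hx hfx
      exact hx (hbij.injective (hfx.trans hf0.symm))
    have hhne : ∀ y : F, y ^ d = 1 → h.eval y ≠ 0 := by
      intro y hy
      obtain ⟨x, hx0, hxs⟩ := hsurjs y hy
      intro hh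
      apply hfne x hx0
      simp [hf, hxs, hh]
    constructor
    · -- gcd = 1
      by_contra hgcd
      set e := Nat.gcd r s with he
      have he0 : 0 < e := Nat.gcd_pos_of_pos_left _ hr
      have he1 : 1 < e := by omega
      have hes : e ∣ s := Nat.gcd_dvd_right _ _
      have her : e ∣ r := Nat.gcd_dvd_left _ _
      have heq : e ∣ q - 1 := hes.trans ⟨d, hsd.symm⟩
      set m := (q - 1) / e with hm
      have hm0 : 0 < m := Nat.div_pos (Nat.le_of_dvd hq1 heq) he0
      have hmlt : m < q - 1 := Nat.div_lt_self hq1 he1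
      set ζ : Fˣ := G ^ m with hζ
      have hζe : ζ ^ e = 1 := by
        rw [hζ, ← pow_mul, Nat.div_mul_cancel heq, ← hordG, pow_orderOf_eq_one]
      have hζne : ζ ≠ 1 := by
        intro h1
        have : orderOf G ∣ m := orderOf_dvd_iff_pow_eq_one.mpr h1
        rw [hordG] at this
        exact absurd (Nat.le_of_dvd hm0 this) (by omega)
      have hζr : (ζ : F) ^ r = 1 := by
        obtain ⟨c, hc⟩ := her
        have h2 : ζ ^ r = 1 := by rw [hc, pow_mul, hζe, one_pow]
        rw [← Units.val_pow_eq_pow_val, h2, Units.val_one]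
      have hζs : (ζ : F) ^ s = 1 := by
        obtain ⟨c, hc⟩ := hes
        have h2 : ζ ^ s = 1 := by rw [hc, pow_mul, hζe, one_pow]
        rw [← Units.val_pow_eq_pow_val, h2, Units.val_one]
      have : f (ζ : F) = f 1 := by
        simp [hf, hζr, hζs]
      have := hbij.injective this
      exact hζne (Units.ext (by simpa using this))
    · -- BijOn
      have hMaps : Set.MapsTo g {x : F | x ^ d = 1} {x : F | x ^ d = 1} := by
        intro y hy
        simp only [Set.mem_setOf_eq] at hy ⊢
        have hh := hhne y hy
        simp only [hgdef, mul_pow, ← pow_mul]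
        rw [mul_comm r d, pow_mul, hy, one_pow, one_mul, hsd, hpow1 _ hh]
      have hSurj : Set.SurjOn g {x : F | x ^ d = 1} {x : F | x ^ d = 1} := by
        intro z hz
        simp only [Set.mem_setOf_eq] at hz
        obtain ⟨a, ha0, has⟩ := hsurjs z hz
        obtain ⟨x, hx⟩ := hbij.surjective a
        have hx0 : x ≠ 0 := by
          intro h0; rw [h0, hf0] at hx; exact ha0 hx.symm
        refine ⟨x ^ s, ?_, ?_⟩
        · exact hmem x hx0
        · rw [← hfpow, hx, has]
      exact (Set.Finite.surjOn_iff_bijOn_of_mapsTo (Set.toFinite _) hMaps).mp hSurj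
  · -- backward
    rintro ⟨hgcd, hbijg⟩
    have hhne : ∀ y : F, y ^ d = 1 → h.eval y ≠ 0 := by
      intro y hy hh
      have := hbijg.mapsTo hy
      simp only [Set.mem_setOf_eq, hgdef, hh, zero_pow hs0.ne', mul_zero,
        zero_pow hd.ne'] at this
      exact zero_ne_one this
    have hfne : ∀ x : F, x ≠ 0 → f x ≠ 0 := by
      intro x hx
      simp only [hf]
      exact mul_ne_zero (pow_ne_zero _ hx) (hhne _ (hmem x hx))
    rw [← Finite.injective_iff_bijective]
    intro x y hxy
    rcases eq_or_ne x 0 with hx0 | hx0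
    · rcases eq_or_ne y 0 with hy0 | hy0
      · rw [hx0, hy0]
      · exfalso
        apply hfne y hy0
        rw [show f y = f x from hxy.symm, hx0, hf0]
    · rcases eq_or_ne y 0 with hy0 | hy0
      · exfalso
        apply hfne x hx0
        rw [show f x = f y from hxy, hy0, hf0]
      · have hxs : x ^ s = y ^ s := by
          apply hbijg.injOn (hmem x hx0) (hmem y hy0)
          rw [← hfpow, ← hfpow]
          exact congrArg (· ^ s) hxy
        have hxr : x ^ r = y ^ r := by
          have hh := hhne _ (hmem x hx0)
          have h4 : x ^ r * h.eval (x ^ s) = y ^ r * h.eval (x ^ s) := by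
            have h5 := hxy
            simp only [hf] at h5
            rw [h5, hxs]
          exact mul_right_cancel₀ hh h4
        exact hinjC x y hx0 hy0 hgcd hxr hxs
end

section
/- Let q be an odd prime power (or any prime power), r, d positive integers with d | q-1, and a ∈ F_q^×. Suppose that η + a/η ∈ μ_{(q-1)/d} for all η ∈ μ_{2d}. Then x^r (x^((q-1)/d) + a) is a permutation polynomial of F_q if and only if −a ∉ μ_d, gcd(r, (q-1)/d) = 1, and gcd(2d, 2r + (q-1)/d) ≤ 2. -/
/-!
Put `s = (q - 1) / d`. For `ξ = η ^ 2` one has `ξ + a = η * (η + a / η)`, so the hypothesis on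
`μ_{2d}` gives `ξ ^ r * (ξ + a) ^ s = η ^ (2r + s)` on `μ_d`: this is `ξ ^ (r + s/2)` when `s` is
even, and `ξ ^ ((2r + s)(d + 1)/2)` when `s` is odd (then `d` is odd too, and `η = ξ ^ ((d+1)/2)`).
So `ξ ↦ ξ ^ r (ξ + a) ^ s` is a monomial `ξ ↦ ξ ^ e` on `μ_d`. Since `x ↦ x ^ s` maps `F_q^×` onto
`μ_d` and `f(x) ^ s = (x ^ s) ^ e`, `f = x ^ r (x ^ s + a)` permutes `F_q` iff `gcd(r, s) = 1` and
`gcd(e, d) = 1`, and the latter is `gcd(2d, 2r + s) ≤ 2`. Finally `-a ∉ μ_d`, as `ξ + a` cannot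
vanish on `μ_d`.
-/

theorem IsCyclic.range_powMonoidHom_eq_ker {G : Type*} [CommGroup G] [IsCyclic G] [Finite G]
    {s d : ℕ} (h : s * d = Nat.card G) :
    (powMonoidHom s : G →* G).range = (powMonoidHom d).ker := by
  have hs : s ≠ 0 := by
    rintro rfl
    exact Nat.card_pos.ne' (by simpa using h.symm)
  refine Subgroup.eq_of_le_of_card_ge ?_ ?_
  · rintro _ ⟨y, rfl⟩
    simp [← pow_mul, h, pow_card_eq_one']
  · rw [IsCyclic.card_powMonoidHom_ker, IsCyclic.card_powMonoidHom_range, ← h,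
      Nat.gcd_mul_left_left, Nat.gcd_mul_right_left,
      Nat.mul_div_cancel_left _ (Nat.pos_of_ne_zero hs)]

theorem exists_ne_one_pow_eq_one_of_dvd_card {G : Type*} [Group G] [Finite G] {g : ℕ}
    (hg : g ∣ Nat.card G) (hg1 : g ≠ 1) : ∃ z : G, z ≠ 1 ∧ z ^ g = 1 := by
  obtain ⟨ℓ, hℓ, hℓg⟩ := Nat.exists_prime_and_dvd hg1
  have := Fact.mk hℓ
  obtain ⟨z, hz⟩ := exists_prime_orderOf_dvd_card' ℓ (hℓg.trans hg)
  refine ⟨z, fun h => hℓ.one_lt.ne' ?_, orderOf_dvd_iff_pow_eq_one.mp (hz ▸ hℓg)⟩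
  rw [← hz, h, orderOf_one]

theorem eq_of_pow_eq_pow_of_coprime {G₀ : Type*} [CommGroupWithZero G₀] {x y : G₀} {m n : ℕ}
    (hmn : m.Coprime n) (hy : y ≠ 0) (hm : x ^ m = y ^ m) (hn : x ^ n = y ^ n) : x = y := by
  have hy' : ∀ k : ℕ, x ^ k = y ^ k → (x / y) ^ k = 1 := fun k hk => by
    rw [div_pow, hk, div_self (pow_ne_zero k hy)]
  exact (div_eq_one_iff_eq hy).mp ((pow_eq_one_iff_of_coprime hmn).mp ⟨hy' m hm, hy' n hn⟩)

theorem Nat.coprime_iff_gcd_two_mul_le_two {n d : ℕ} (hd : d ≠ 0) :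
    n.Coprime d ↔ (2 * d).gcd (2 * n) ≤ 2 := by
  have := Nat.gcd_pos_of_pos_left n (Nat.pos_of_ne_zero hd)
  rw [Nat.gcd_mul_left, Nat.Coprime, Nat.gcd_comm]
  omega

theorem Nat.coprime_mul_iff_gcd_two_mul_le_two {m c d : ℕ} (hm : Odd m) (hdc : d + 1 = 2 * c) :
    (m * c).Coprime d ↔ (2 * d).gcd m ≤ 2 := by
  have hcd : c.Coprime d := Nat.Coprime.coprime_mul_left (k := 2) (by rw [← hdc]; simp)
  have hgcd_odd : ¬ 2 ∣ d.gcd m := fun h => by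
    have := h.trans (Nat.gcd_dvd_left d m)
    omega
  have := Nat.gcd_pos_of_pos_left m (by omega : 0 < d)
  rw [Nat.Coprime, Nat.Coprime.gcd_mul_right_cancel m hcd,
    Nat.Coprime.gcd_mul_left_cancel d (Nat.coprime_two_left.mpr hm), Nat.gcd_comm]
  omega

section SquareRoot

variable {L : Type*} [Field L] {r s d : ℕ} {b : L}

theorem sq_pow_mul_sq_add_pow {η : L} (hη : η ≠ 0) (h : (η + b / η) ^ s = 1) :
    (η ^ 2) ^ r * (η ^ 2 + b) ^ s = η ^ (2 * r + s) := by
  have hfac : η ^ 2 + b = η * (η + b / η) := by field_simp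
  rw [hfac, mul_pow, h, mul_one, ← pow_mul, pow_add]

theorem pow_mul_add_pow_eq_pow_of_even [IsAlgClosed L] (hd : d ≠ 0)
    (hmu : ∀ η : L, η ^ (2 * d) = 1 → (η + b / η) ^ s = 1) {t : ℕ} (hst : s = 2 * t) {ξ : L}
    (hξ : ξ ^ d = 1) : ξ ^ r * (ξ + b) ^ s = ξ ^ (r + t) := by
  obtain ⟨η, rfl⟩ := IsAlgClosed.exists_pow_nat_eq ξ two_pos
  have hη : η ≠ 0 := by
    rintro rfl
    simp [hd] at hξ
  rw [sq_pow_mul_sq_add_pow hη (hmu η (by rw [pow_mul, hξ])), ← pow_mul, hst, mul_add]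

theorem pow_mul_add_pow_eq_pow_of_odd {c : ℕ} (hdc : d + 1 = 2 * c)
    (hmu : ∀ η : L, η ^ (2 * d) = 1 → (η + b / η) ^ s = 1) {ξ : L}
    (hξ : ξ ^ d = 1) : ξ ^ r * (ξ + b) ^ s = ξ ^ ((2 * r + s) * c) := by
  have hsq : (ξ ^ c) ^ 2 = ξ := by rw [← pow_mul, mul_comm, ← hdc, pow_succ, hξ, one_mul]
  have hη : ξ ^ c ≠ 0 := pow_ne_zero c (IsUnit.of_pow_eq_one hξ (by omega)).ne_zero
  rw [mul_comm (2 * r + s), pow_mul, ← sq_pow_mul_sq_add_pow hη (hmu _ (by rw [pow_mul, hsq, hξ])),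
    hsq]

theorem neg_one_eq_one_of_odd_of_even (hmu : ∀ η : L, η ^ (2 * d) = 1 → (η + b / η) ^ s = 1)
    (hs : Odd s) (hd : Even d) : (-1 : L) = 1 := by
  have h1 := hmu 1 (one_pow _)
  have h2 := hmu (-1) ((hd.mul_left 2).neg_one_pow)
  rw [div_one] at h1
  rw [div_neg, div_one, ← neg_add, hs.neg_pow, h1] at h2
  exact h2

end SquareRoot

namespace FiniteField

variable {F : Type*} [Field F] [Fintype F]

theorem mul_ne_zero_of_eq_card_sub_one {s d : ℕ} (hsd : s * d = Fintype.card F - 1) :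
    s * d ≠ 0 := by
  have := Fintype.one_lt_card (α := F)
  omega

theorem exists_ne_one_pow_eq_one {g : ℕ} (hg : g ∣ Fintype.card F - 1) (hg1 : g ≠ 1) :
    ∃ z : F, z ≠ 1 ∧ z ^ g = 1 := by
  obtain ⟨z, hz1, hz⟩ := exists_ne_one_pow_eq_one_of_dvd_card (G := Fˣ)
    (by rwa [Nat.card_units, Nat.card_eq_fintype_card]) hg1
  exact ⟨z, Units.val_eq_one.not.mpr hz1, by rw [← Units.val_pow_eq_pow_val, hz, Units.val_one]⟩

theorem pow_pow_eq_one {s d : ℕ} (hsd : s * d = Fintype.card F - 1) {x : F} (hx : x ≠ 0) :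
    (x ^ s) ^ d = 1 := by
  rw [← pow_mul, hsd]
  exact pow_card_sub_one_eq_one x hx

theorem exists_pow_eq {s d : ℕ} (hsd : s * d = Fintype.card F - 1) {w : F} (hw : w ^ d = 1) :
    ∃ y : F, y ^ s = w := by
  have hw0 : w ≠ 0 := (IsUnit.of_pow_eq_one hw (right_ne_zero_of_mul
    (mul_ne_zero_of_eq_card_sub_one hsd))).ne_zero
  have hmem : Units.mk0 w hw0 ∈ (powMonoidHom d : Fˣ →* Fˣ).ker := by
    simp [MonoidHom.mem_ker, Units.ext_iff, hw]
  rw [← IsCyclic.range_powMonoidHom_eq_ker (by rwa [Nat.card_units, Nat.card_eq_fintype_card])]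
    at hmem
  obtain ⟨y, hy⟩ := hmem
  exact ⟨y, by simpa [Units.ext_iff] using hy⟩

section PowMulAddPow

variable {r s d e : ℕ} {a : F}

theorem pow_mul_add_pow_eq (hsd : s * d = Fintype.card F - 1)
    (heq : ∀ ξ : F, ξ ^ d = 1 → ξ ^ r * (ξ + a) ^ s = ξ ^ e) {x : F} (hx : x ≠ 0) :
    (x ^ r * (x ^ s + a)) ^ s = (x ^ s) ^ e := by
  rw [← heq _ (pow_pow_eq_one hsd hx), mul_pow, ← pow_mul, ← pow_mul, mul_comm r s]

theorem pow_add_ne_zero (hsd : s * d = Fintype.card F - 1)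
    (heq : ∀ ξ : F, ξ ^ d = 1 → ξ ^ r * (ξ + a) ^ s = ξ ^ e) {x : F} (hx : x ≠ 0) :
    x ^ s + a ≠ 0 := by
  intro h
  have := pow_mul_add_pow_eq hsd heq hx
  rw [h, mul_zero, zero_pow (left_ne_zero_of_mul (mul_ne_zero_of_eq_card_sub_one hsd))] at this
  exact pow_ne_zero e (pow_ne_zero s hx) this.symm

theorem pow_mul_add_eq_zero_iff (hr : r ≠ 0) (hsd : s * d = Fintype.card F - 1)
    (heq : ∀ ξ : F, ξ ^ d = 1 → ξ ^ r * (ξ + a) ^ s = ξ ^ e) {x : F} :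
    x ^ r * (x ^ s + a) = 0 ↔ x = 0 := by
  refine ⟨fun h => ?_, by rintro rfl; simp [hr]⟩
  by_contra hx
  exact mul_ne_zero (pow_ne_zero r hx) (pow_add_ne_zero hsd heq hx) h

theorem injective_pow_mul_add_of_coprime (hr : r ≠ 0) (hsd : s * d = Fintype.card F - 1)
    (heq : ∀ ξ : F, ξ ^ d = 1 → ξ ^ r * (ξ + a) ^ s = ξ ^ e) (hrs : r.Coprime s)
    (hed : e.Coprime d) : Function.Injective fun x : F => x ^ r * (x ^ s + a) := by
  intro x y hxy
  simp only at hxy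
  have hzero : ∀ z : F, z ^ r * (z ^ s + a) = 0 ↔ z = 0 := fun z =>
    pow_mul_add_eq_zero_iff hr hsd heq
  by_cases hy : y = 0
  · subst hy
    exact (hzero x).mp (hxy.trans ((hzero 0).mpr rfl))
  have hx : x ≠ 0 := fun hx => hy ((hzero y).mp (hxy ▸ (hzero x).mpr hx))
  have hs : x ^ s = y ^ s := eq_of_pow_eq_pow_of_coprime hed (pow_ne_zero s hy)
    (by rw [← pow_mul_add_pow_eq hsd heq hx, ← pow_mul_add_pow_eq hsd heq hy, hxy])
    (by rw [pow_pow_eq_one hsd hx, pow_pow_eq_one hsd hy])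
  have hr' : x ^ r = y ^ r :=
    mul_right_cancel₀ (pow_add_ne_zero hsd heq hx) (by rw [hxy, hs])
  exact eq_of_pow_eq_pow_of_coprime hrs hy hr' hs

theorem coprime_of_injective_pow_mul_add (hsd : s * d = Fintype.card F - 1)
    (hinj : Function.Injective fun x : F => x ^ r * (x ^ s + a)) : r.Coprime s := by
  by_contra h
  obtain ⟨z, hz1, hz⟩ := exists_ne_one_pow_eq_one
    ((Nat.gcd_dvd_right r s).trans (Dvd.intro d hsd)) h
  rw [pow_gcd_eq_one] at hz
  exact hz1 (hinj (by simp [hz.1, hz.2]))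

theorem coprime_of_surjective_pow_mul_add (hr : r ≠ 0) (hsd : s * d = Fintype.card F - 1)
    (heq : ∀ ξ : F, ξ ^ d = 1 → ξ ^ r * (ξ + a) ^ s = ξ ^ e)
    (hsurj : Function.Surjective fun x : F => x ^ r * (x ^ s + a)) : e.Coprime d := by
  obtain ⟨hs, hd⟩ := mul_ne_zero_iff.mp (mul_ne_zero_of_eq_card_sub_one hsd)
  set μ : Set F := {ξ | ξ ^ d = 1}
  have hmaps : Set.MapsTo (· ^ e) μ μ := fun ξ (hξ : ξ ^ d = 1) => by
    simp only [μ, Set.mem_ofPred_eq]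
    rw [← pow_mul, mul_comm, pow_mul, hξ, one_pow]
  -- `w = y ^ s` with `y = f x`, and `f x ^ s = (x ^ s) ^ e`
  have hsurjOn : Set.SurjOn (· ^ e) μ μ := by
    intro w (hw : w ^ d = 1)
    obtain ⟨y, rfl⟩ := exists_pow_eq hsd hw
    obtain ⟨x, rfl⟩ := hsurj y
    have hx : x ≠ 0 := by
      rintro rfl
      simp [hr, hs, hd] at hw
    exact ⟨x ^ s, pow_pow_eq_one hsd hx, (pow_mul_add_pow_eq hsd heq hx).symm⟩
  have hinjOn := (((Set.toFinite μ).surjOn_iff_bijOn_of_mapsTo hmaps).mp hsurjOn).injOn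
  by_contra h
  obtain ⟨z, hz1, hz⟩ := exists_ne_one_pow_eq_one
    ((Nat.gcd_dvd_right e d).trans (Dvd.intro_left s hsd)) h
  rw [pow_gcd_eq_one] at hz
  exact hz1 (hinjOn hz.2 (one_pow d) (by simp [hz.1]))

theorem bijective_pow_mul_add_iff (hr : r ≠ 0) (hsd : s * d = Fintype.card F - 1)
    (heq : ∀ ξ : F, ξ ^ d = 1 → ξ ^ r * (ξ + a) ^ s = ξ ^ e) :
    Function.Bijective (fun x : F => x ^ r * (x ^ s + a)) ↔ r.Coprime s ∧ e.Coprime d :=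
  ⟨fun h => ⟨coprime_of_injective_pow_mul_add hsd h.1,
      coprime_of_surjective_pow_mul_add hr hsd heq h.2⟩,
    fun ⟨hrs, hed⟩ => Finite.injective_iff_bijective.mp
      (injective_pow_mul_add_of_coprime hr hsd heq hrs hed)⟩

theorem neg_pow_ne_one (hsd : s * d = Fintype.card F - 1)
    (heq : ∀ ξ : F, ξ ^ d = 1 → ξ ^ r * (ξ + a) ^ s = ξ ^ e) : ¬ (-a) ^ d = 1 := by
  obtain ⟨hs, hd⟩ := mul_ne_zero_iff.mp (mul_ne_zero_of_eq_card_sub_one hsd)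
  intro h
  have := heq (-a) h
  rw [neg_add_cancel, zero_pow hs, mul_zero] at this
  exact pow_ne_zero e (IsUnit.of_pow_eq_one h hd).ne_zero this.symm

theorem exists_pow_mul_add_pow_eq_pow (hsd : s * d = Fintype.card F - 1)
    (hmu : ∀ η : AlgebraicClosure F, η ^ (2 * d) = 1 →
      (η + algebraMap F (AlgebraicClosure F) a / η) ^ s = 1) :
    ∃ e : ℕ, (∀ ξ : F, ξ ^ d = 1 → ξ ^ r * (ξ + a) ^ s = ξ ^ e) ∧
      (e.Coprime d ↔ (2 * d).gcd (2 * r + s) ≤ 2) := by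
  set ι := algebraMap F (AlgebraicClosure F)
  have hd : d ≠ 0 := right_ne_zero_of_mul (mul_ne_zero_of_eq_card_sub_one hsd)
  suffices ∃ e : ℕ, (∀ ξ : AlgebraicClosure F, ξ ^ d = 1 → ξ ^ r * (ξ + ι a) ^ s = ξ ^ e) ∧
      (e.Coprime d ↔ (2 * d).gcd (2 * r + s) ≤ 2) by
    obtain ⟨e, heq, he⟩ := this
    refine ⟨e, fun ξ hξ => ι.injective ?_, he⟩
    simpa using heq (ι ξ) (by rw [← map_pow, hξ, map_one])
  rcases Nat.even_or_odd s with ⟨t, rfl⟩ | hs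
  · refine ⟨r + t, fun ξ => pow_mul_add_pow_eq_pow_of_even hd hmu (two_mul t).symm, ?_⟩
    rw [← two_mul, ← mul_add]
    exact Nat.coprime_iff_gcd_two_mul_le_two hd
  · -- `d` is odd, since otherwise `-1 = 1` in `F`, whose order `s * d + 1` would then be even
    have hdodd : Odd d := by
      refine Nat.not_even_iff_odd.mp fun hde => ?_
      have h : (-1 : F) = 1 :=
        ι.injective (by simpa using neg_one_eq_one_of_odd_of_even hmu hs hde)
      have hcard := even_card_iff_char_two.mp (neg_one_eq_one_iff.mp h)
      have hq := Fintype.one_lt_card (α := F)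
      have heven : Even (s * d) := hde.mul_left s
      rw [hsd, Nat.even_sub (by omega)] at heven
      simp [Nat.even_iff, hcard] at heven
    obtain ⟨c, hc⟩ : ∃ c, d + 1 = 2 * c := by
      obtain ⟨w, hw⟩ := hdodd
      exact ⟨w + 1, by omega⟩
    have hodd : Odd (2 * r + s) := Even.add_odd (even_two_mul r) hs
    exact ⟨(2 * r + s) * c, fun ξ => pow_mul_add_pow_eq_pow_of_odd hc hmu,
      Nat.coprime_mul_iff_gcd_two_mul_le_two hodd hc⟩

end PowMulAddPow

end FiniteField

theorem stmt_1_general (p k r d : ℕ) (hr : 0 < r)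
    (F : Type*) [Field F] [Fintype F] (hF : Fintype.card F = p ^ k)
    (hdvd : d ∣ p ^ k - 1) (a : F)
    (hmu : ∀ η : AlgebraicClosure F, η ^ (2 * d) = 1 →
      (η + (algebraMap F (AlgebraicClosure F) a) / η) ^ ((p ^ k - 1) / d) = 1) :
    Function.Bijective (fun x : F => x ^ r * (x ^ ((p ^ k - 1) / d) + a)) ↔
      (¬ (-a) ^ d = 1 ∧ Nat.gcd r ((p ^ k - 1) / d) = 1 ∧
        Nat.gcd (2 * d) (2 * r + (p ^ k - 1) / d) ≤ 2) := by
  have hsd : (p ^ k - 1) / d * d = Fintype.card F - 1 := by rw [hF]; exact Nat.div_mul_cancel hdvd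
  obtain ⟨e, heq, he⟩ := FiniteField.exists_pow_mul_add_pow_eq_pow hsd hmu
  rw [FiniteField.bijective_pow_mul_add_iff hr.ne' hsd heq, he]
  have hneg := FiniteField.neg_pow_ne_one hsd heq
  exact ⟨fun h => ⟨hneg, h⟩, fun h => h.2⟩

theorem stmt_1 (p k r d : ℕ) (hp : p.Prime) (hk : 0 < k) (hr : 0 < r) (hd : 0 < d)
    (F : Type*) [Field F] [Fintype F] (hF : Fintype.card F = p ^ k)
    (hdvd : d ∣ p ^ k - 1) (a : F) (ha : a ≠ 0)
    (hmu : ∀ η : AlgebraicClosure F, η ^ (2 * d) = 1 →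
      (η + (algebraMap F (AlgebraicClosure F) a) / η) ^ ((p ^ k - 1) / d) = 1) :
    Function.Bijective (fun x : F => x ^ r * (x ^ ((p ^ k - 1) / d) + a)) ↔
      (¬ (-a) ^ d = 1 ∧ Nat.gcd r ((p ^ k - 1) / d) = 1 ∧
        Nat.gcd (2 * d) (2 * r + (p ^ k - 1) / d) ≤ 2) :=
  stmt_1_general p k r d hr F hF hdvd a hmu
end

section
/- Let m, k be positive integers with gcd(2^k − 1, 2^m + 1) = 1, and let U be the subgroup of order 2^m + 1 of F_{2^{2m}}^×. Then for every x ∈ U the denominator x^{2^k+1} + x + 1 is nonzero, and the map x ↦ (x^{2^k+1} + x^{2^k} + 1)/(x^{2^k+1} + x + 1) is a bijection of U onto itself. -/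
/-!
Write `N(x) = x^(Q+1) + x^Q + 1` and `D(x) = x^(Q+1) + x + 1` with `Q = 2^k`, `q = 2^m`, in
characteristic 2. Both `x ↦ x + 1` and `x ↦ x⁻¹` exchange `N` and `D` up to a common factor, so
`f = N/D` is invariant under `x ↦ (x + 1)⁻¹`, which maps `U \ {1}` into `T = {t | t^q = t + 1}`.
On `T` the Frobenius `t ↦ t^q` acts as `t ↦ t + 1` and therefore swaps `N(t)` and `D(t)`, whence
`f(t)^q = f(t)⁻¹`, i.e. `f(t) ∈ U`. If `f(t) = f(u)` with `t ≠ u` in `T`, then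
`z = t + (t² + t + 1)/(t + u)` satisfies `z^Q = z` and `z^q = z + 1`; but `z^Q = z` together
with `z^(q²) = z` forces `z^(2^gcd(k, 2m)) = z`, and the arithmetic hypothesis says exactly that
`gcd(k, 2m) = gcd(k, m)` divides `m`, so `z^q = z`. The same obstruction shows `N ≠ D` on `T`,
which gives `D ≠ 0` and `f ≠ 1` there. Injectivity on the finite set `U` gives bijectivity.
-/

theorem Nat.gcd_two_mul_dvd_of_gcd_two_pow_sub_one_two_pow_add_one {k m : ℕ}
    (h : Nat.gcd (2 ^ k - 1) (2 ^ m + 1) = 1) : Nat.gcd k (2 * m) ∣ m := by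
  have hsq : 2 ^ (2 * m) - 1 = (2 ^ m - 1) * (2 ^ m + 1) := by
    zify [Nat.one_le_two_pow (n := m), Nat.one_le_two_pow (n := 2 * m)]
    ring
  have hpow : 2 ^ Nat.gcd k (2 * m) - 1 = 2 ^ Nat.gcd k m - 1 := by
    rw [← Nat.pow_sub_one_gcd_pow_sub_one, ← Nat.pow_sub_one_gcd_pow_sub_one, hsq,
      Nat.Coprime.gcd_mul_right_cancel_right _ (Nat.Coprime.symm h)]
  rw [Nat.pow_right_injective le_rfl
    (Nat.sub_one_cancel (Nat.two_pow_pos _) (Nat.two_pow_pos _) hpow)]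
  exact Nat.gcd_dvd_right k m

theorem isPeriodicPt_frobenius_iff {R : Type*} [CommSemiring R] {p : ℕ} [ExpChar R p] {n : ℕ}
    {z : R} : Function.IsPeriodicPt (frobenius R p) n z ↔ z ^ p ^ n = z := by
  rw [Function.IsPeriodicPt, Function.IsFixedPt, iterate_frobenius]

theorem pow_two_pow_ne_add_one {R : Type*} [CommRing R] [Nontrivial R] [CharP R 2] {k m : ℕ}
    (h : Nat.gcd k (2 * m) ∣ m) {z : R} (hz : z ^ 2 ^ k = z) : z ^ 2 ^ m ≠ z + 1 := by
  intro hzm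
  have h2m : z ^ 2 ^ (2 * m) = z := by
    rw [two_mul, pow_add, pow_mul, hzm, add_pow_char_pow, hzm, one_pow, add_assoc,
      CharTwo.add_self_eq_zero, add_zero]
  have := ((isPeriodicPt_frobenius_iff.2 hz).gcd (isPeriodicPt_frobenius_iff.2 h2m)).trans_dvd h
  rw [isPeriodicPt_frobenius_iff, hzm] at this
  simp at this

namespace UnitCircle

section CommRing

variable {R S : Type*} [CommRing R] [CommRing S] (k : ℕ)

def num (x : R) : R := x ^ (2 ^ k + 1) + x ^ 2 ^ k + 1

def den (x : R) : R := x ^ (2 ^ k + 1) + x + 1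

variable {k}

theorem map_num (φ : R →+* S) (x : R) : φ (num k x) = num k (φ x) := by
  simp [num]

theorem map_den (φ : R →+* S) (x : R) : φ (den k x) = den k (φ x) := by
  simp [den]

variable [CharP R 2]

theorem num_add_one (x : R) : num k (x + 1) = den k x := by
  rw [num, den, pow_succ, add_pow_char_pow, one_pow]
  grind

theorem den_add_one (x : R) : den k (x + 1) = num k x := by
  rw [num, den, pow_succ, add_pow_char_pow, one_pow]
  grind

theorem num_one : num k (1 : R) = 1 := by
  rw [num, one_pow, one_pow, CharTwo.add_self_eq_zero, zero_add]

theorem den_one : den k (1 : R) = 1 := by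
  rw [den, one_pow, CharTwo.add_self_eq_zero, zero_add]

end CommRing

variable {F : Type*} [Field F] {k m : ℕ}

def frac (k : ℕ) (x : F) : F := num k x / den k x

theorem num_inv {x : F} (hx : x ≠ 0) : num k x⁻¹ = x⁻¹ ^ (2 ^ k + 1) * den k x := by
  simp only [num, den, inv_pow, pow_succ]
  field_simp
  ring

theorem den_inv {x : F} (hx : x ≠ 0) : den k x⁻¹ = x⁻¹ ^ (2 ^ k + 1) * num k x := by
  simp only [num, den, inv_pow, pow_succ]
  field_simp
  ring

theorem frac_inv {x : F} (hx : x ≠ 0) : frac k x⁻¹ = (frac k x)⁻¹ := by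
  rw [frac, frac, num_inv hx, den_inv hx, mul_div_mul_left _ _ (by simpa using hx), inv_div]

variable [CharP F 2]

theorem frac_add_one (x : F) : frac k (x + 1) = (frac k x)⁻¹ := by
  rw [frac, frac, num_add_one, den_add_one, inv_div]

theorem frac_one : frac k (1 : F) = 1 := by
  rw [frac, num_one, den_one, div_one]

theorem frac_inv_add_one {x : F} (hx : x ≠ 1) : frac k (x + 1)⁻¹ = frac k x := by
  rw [frac_inv (mt CharTwo.add_eq_zero.1 hx), frac_add_one, inv_inv]

/- When `|F| = q²` with `q = 2^m`, the set `{t | t ^ q = t + 1}` consists of the elements of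
relative trace `t + t ^ q = 1` over `𝔽_q`. -/
section TraceOne

variable {t : F} (ht : t ^ 2 ^ m = t + 1)
include ht

theorem num_pow_two_pow : num k t ^ 2 ^ m = den k t := by
  rw [← iterateFrobenius_def (p := 2), map_num, iterateFrobenius_def, ht, num_add_one]

theorem den_pow_two_pow : den k t ^ 2 ^ m = num k t := by
  rw [← iterateFrobenius_def (p := 2), map_den, iterateFrobenius_def, ht, den_add_one]

variable (h : Nat.gcd k (2 * m) ∣ m)
include h

theorem num_ne_den : num k t ≠ den k t := by
  intro heq
  refine pow_two_pow_ne_add_one h ?_ ht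
  simp only [num, den] at heq
  grind

theorem den_ne_zero : den k t ≠ 0 := by
  intro h0
  apply num_ne_den ht h
  rw [← den_pow_two_pow ht, h0, zero_pow (by positivity)]

theorem frac_pow_two_pow_add_one : frac k t ^ (2 ^ m + 1) = 1 := by
  have hnum : num k t ≠ 0 := by
    rw [← den_pow_two_pow ht]
    exact pow_ne_zero _ (den_ne_zero ht h)
  rw [frac, div_pow, pow_succ, pow_succ, num_pow_two_pow ht, den_pow_two_pow ht, mul_comm,
    div_self (mul_ne_zero hnum (den_ne_zero ht h))]

theorem frac_ne_one : frac k t ≠ 1 := by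
  rw [frac, Ne, div_eq_one_iff_eq (den_ne_zero ht h)]
  exact num_ne_den ht h

end TraceOne

theorem injOn_frac_setOf_pow_eq_add_one (h : Nat.gcd k (2 * m) ∣ m) :
    Set.InjOn (frac k) {t : F | t ^ 2 ^ m = t + 1} := by
  intro t ht u hu htu
  by_contra hne
  have hcross : (t ^ 2 ^ k + t) * den k u = (u ^ 2 ^ k + u) * den k t := by
    rw [frac, frac, div_eq_div_iff (den_ne_zero ht h) (den_ne_zero hu h)] at htu
    simp only [num, den] at htu ⊢
    grind
  have hsum : t + u ≠ 0 := mt CharTwo.add_eq_zero.1 hne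
  have hsum' : t ^ 2 ^ k + u ^ 2 ^ k ≠ 0 := by
    rw [← add_pow_char_pow]
    exact pow_ne_zero _ hsum
  -- `hcross` says precisely that `e` solves `e ^ Q + e = t ^ Q + t`.
  set e := (t ^ 2 + t + 1) / (t + u)
  have he : (t + u) * e = t ^ 2 + t + 1 := mul_div_cancel₀ _ hsum
  have he' : (t ^ 2 ^ k + u ^ 2 ^ k) * e ^ 2 ^ k = (t ^ 2 ^ k) ^ 2 + t ^ 2 ^ k + 1 := by
    rw [← add_pow_char_pow, ← mul_pow, he, add_pow_char_pow, add_pow_char_pow, one_pow,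
      pow_right_comm]
  have hek : e ^ 2 ^ k + e = t ^ 2 ^ k + t := by
    apply mul_left_cancel₀ (mul_ne_zero hsum hsum')
    simp only [den, pow_succ] at hcross
    grind
  have hem : e ^ 2 ^ m = e := by
    rw [div_pow, add_pow_char_pow, add_pow_char_pow, add_pow_char_pow, one_pow, pow_right_comm,
      ht, hu]
    congr 1 <;> grind
  apply pow_two_pow_ne_add_one h (z := e + t)
  · rw [add_pow_char_pow]
    grind
  · rw [add_pow_char_pow, hem, ht, add_assoc]

theorem inv_add_one_pow_two_pow {x : F} (hx : x ^ (2 ^ m + 1) = 1) (hx1 : x ≠ 1) :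
    (x + 1)⁻¹ ^ 2 ^ m = (x + 1)⁻¹ + 1 := by
  have hx0 : x ≠ 0 := by
    rintro rfl
    simp at hx
  have hxm : x ^ 2 ^ m = x⁻¹ := eq_inv_of_mul_eq_one_left (by rwa [← pow_succ])
  have hx1' : x + 1 ≠ 0 := mt CharTwo.add_eq_zero.1 hx1
  rw [inv_pow, add_pow_char_pow, one_pow, hxm]
  field_simp
  grind

section PowEqOne

variable (h : Nat.gcd k (2 * m) ∣ m)
include h

theorem den_ne_zero_of_pow_eq_one {x : F} (hx : x ^ (2 ^ m + 1) = 1) : den k x ≠ 0 := by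
  rcases eq_or_ne x 1 with rfl | hx1
  · rw [den_one]
    exact one_ne_zero
  · have ht := den_ne_zero (inv_add_one_pow_two_pow hx hx1) h
    rw [den_inv (mt CharTwo.add_eq_zero.1 hx1), num_add_one] at ht
    exact right_ne_zero_of_mul ht

theorem frac_pow_eq_one {x : F} (hx : x ^ (2 ^ m + 1) = 1) : frac k x ^ (2 ^ m + 1) = 1 := by
  rcases eq_or_ne x 1 with rfl | hx1
  · rw [frac_one, one_pow]
  · rw [← frac_inv_add_one hx1]
    exact frac_pow_two_pow_add_one (inv_add_one_pow_two_pow hx hx1) h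

theorem eq_one_of_frac_eq_one {x : F} (hx : x ^ (2 ^ m + 1) = 1) (h1 : frac k x = 1) : x = 1 := by
  by_contra hx1
  apply frac_ne_one (inv_add_one_pow_two_pow hx hx1) h
  rwa [frac_inv_add_one hx1]

theorem injOn_frac_setOf_pow_eq_one : Set.InjOn (frac k) {x : F | x ^ (2 ^ m + 1) = 1} := by
  intro x hx y hy hxy
  rcases eq_or_ne x 1 with rfl | hx1
  · exact (eq_one_of_frac_eq_one h hy (hxy.symm.trans frac_one)).symm
  rcases eq_or_ne y 1 with rfl | hy1
  · exact eq_one_of_frac_eq_one h hx (hxy.trans frac_one)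
  have := injOn_frac_setOf_pow_eq_add_one h (inv_add_one_pow_two_pow hx hx1)
    (inv_add_one_pow_two_pow hy hy1) (by rwa [frac_inv_add_one hx1, frac_inv_add_one hy1])
  simpa using this

theorem bijOn_frac_setOf_pow_eq_one :
    Set.BijOn (frac k) {x : F | x ^ (2 ^ m + 1) = 1} {x : F | x ^ (2 ^ m + 1) = 1} := by
  have hfin : {x : F | x ^ (2 ^ m + 1) = 1}.Finite :=
    (Polynomial.nthRootsFinset (2 ^ m + 1) (1 : F)).finite_toSet.subset fun x hx =>
      (Polynomial.mem_nthRootsFinset (Nat.succ_pos _) 1).2 hx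
  exact (hfin.injOn_iff_bijOn_of_mapsTo fun x hx => frac_pow_eq_one h hx).1
    (injOn_frac_setOf_pow_eq_one h)

end PowEqOne

end UnitCircle

theorem stmt_5_general (m k : ℕ)
    (hgcd : Nat.gcd (2 ^ k - 1) (2 ^ m + 1) = 1)
    (F : Type*) [Field F] [Fintype F] (hF : Fintype.card F = 2 ^ (2 * m)) :
    (∀ x : F, x ^ (2 ^ m + 1) = 1 → x ^ (2 ^ k + 1) + x + 1 ≠ 0) ∧
      Set.BijOn (fun x : F => (x ^ (2 ^ k + 1) + x ^ 2 ^ k + 1) / (x ^ (2 ^ k + 1) + x + 1))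
        {x : F | x ^ (2 ^ m + 1) = 1} {x : F | x ^ (2 ^ m + 1) = 1} := by
  have : CharP F 2 := charP_of_card_eq_prime_pow hF
  have h := Nat.gcd_two_mul_dvd_of_gcd_two_pow_sub_one_two_pow_add_one hgcd
  exact ⟨fun _ hx => UnitCircle.den_ne_zero_of_pow_eq_one h hx,
    UnitCircle.bijOn_frac_setOf_pow_eq_one h⟩

theorem stmt_5 (m k : ℕ) (hm : 0 < m) (hk : 0 < k)
    (hgcd : Nat.gcd (2 ^ k - 1) (2 ^ m + 1) = 1)
    (F : Type*) [Field F] [Fintype F] (hF : Fintype.card F = 2 ^ (2 * m)) :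
    (∀ x : F, x ^ (2 ^ m + 1) = 1 → x ^ (2 ^ k + 1) + x + 1 ≠ 0) ∧
      Set.BijOn (fun x : F => (x ^ (2 ^ k + 1) + x ^ 2 ^ k + 1) / (x ^ (2 ^ k + 1) + x + 1))
        {x : F | x ^ (2 ^ m + 1) = 1} {x : F | x ^ (2 ^ m + 1) = 1} :=
  stmt_5_general m k hgcd F hF
end

section
/- Let m be a positive integer with gcd(3, m) = 1, and U the subgroup of order 2^m + 1 of F_{2^{2m}}^×. Then the map x ↦ (x^3 + x^2 + 1)/(x^3 + x + 1) is a well-defined bijection of U. -/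
/-!
In characteristic 2, `X⁷ + 1 = (X + 1)(X³ + X + 1)(X³ + X² + 1)`. As `7 ∤ 4^m - 1` when `3 ∤ m`,
the only 7th root of unity in `𝔽_{4^m}` is `1`, so neither cubic has a root there.

Write `σ x = x^(2^m)`, so that `U = {x | σ x * x = 1}` and `σ` acts on `U` as inversion.
Since `x³ + x² + 1 = x³ g(1/x)` for `g = x³ + x + 1`, the map `f = cubicRatio` satisfies
`σ (f x) = (f x)⁻¹` on `U`, so `f` maps the finite set `U` into itself and only injectivity is
left. If `f x = f y` with `x ≠ y`, then
`w = x/(x+y)` and `v = xy/((xy)² + xy + 1)` satisfy `w² + w = v² + v`, so `w + v ∈ 𝔽₂` is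
`σ`-fixed. Since `xy ∈ U`, `v` is `σ`-fixed, hence so is `w`; but `σ w = y/(x+y)`, so `x = y`.
-/

theorem Nat.coprime_seven_four_pow_sub_one {m : ℕ} (hm : Nat.Coprime 3 m) :
    Nat.Coprime 7 (4 ^ m - 1) := by
  have h3 : ¬ 3 ∣ m := (Nat.Prime.coprime_iff_not_dvd Nat.prime_three).1 hm
  have hmod : 4 ^ m % 7 = 4 ^ (m % 3) % 7 := by
    conv_lhs => rw [← Nat.div_add_mod m 3, pow_add, pow_mul, Nat.mul_mod, Nat.pow_mod]
    norm_num
  rw [Nat.Prime.coprime_iff_not_dvd (by norm_num)]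
  intro hdvd
  have : 4 ^ m % 7 = 1 := by have := Nat.one_le_pow m 4 (by norm_num); omega
  have : m % 3 < 3 := Nat.mod_lt _ (by norm_num)
  interval_cases h : m % 3 <;> omega

theorem FiniteField.eq_one_of_pow_eq_one {K : Type*} [GroupWithZero K] [Fintype K] {a : K}
    {n : ℕ} (hn₀ : n ≠ 0) (hn : n.Coprime (Fintype.card K - 1)) (ha : a ^ n = 1) : a = 1 := by
  have ha₀ : a ≠ 0 := by rintro rfl; simp [zero_pow hn₀] at ha
  simpa [hn.gcd_eq_one] using pow_gcd_eq_one.2 ⟨ha, FiniteField.pow_card_sub_one_eq_one a ha₀⟩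

section CharTwo

variable {R : Type*} [CommRing R] [CharP R 2]

theorem CharTwo.pow_seven_add_one (x : R) :
    x ^ 7 + 1 = (x + 1) * (x ^ 3 + x + 1) * (x ^ 3 + x ^ 2 + 1) := by
  ring_nf; reduce_mod_char!

variable [IsDomain R]

theorem cubics_ne_zero_of_pow_seven_eq_one (h7 : ∀ a : R, a ^ 7 = 1 → a = 1) (x : R) :
    x ^ 3 + x + 1 ≠ 0 ∧ x ^ 3 + x ^ 2 + 1 ≠ 0 := by
  by_cases hx : x = 1
  · subst hx; norm_num; reduce_mod_char!; exact one_ne_zero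
  have h : x ^ 7 + 1 ≠ 0 := fun h => hx (h7 x (CharTwo.add_eq_zero.1 h))
  rw [CharTwo.pow_seven_add_one, mul_ne_zero_iff, mul_ne_zero_iff] at h
  exact ⟨h.1.2, h.2⟩

theorem map_eq_self_of_sq_add_self_eq (σ : R →+* R) {w v : R} (h : w ^ 2 + w = v ^ 2 + v)
    (hv : σ v = v) : σ w = w := by
  have hidem : IsIdempotentElem (w + v) := by
    unfold IsIdempotentElem
    linear_combination (norm := (ring_nf; reduce_mod_char!)) h
  have hfix : σ (w + v) = w + v := by
    rcases IsIdempotentElem.iff_eq_zero_or_one.1 hidem with h0 | h1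
    · rw [h0, map_zero]
    · rw [h1, map_one]
  rwa [map_add, hv, add_left_inj] at hfix

end CharTwo

def cubicRatio {F : Type*} [Field F] (x : F) : F := (x ^ 3 + x ^ 2 + 1) / (x ^ 3 + x + 1)

section Field

variable {F : Type*} [Field F]

theorem quartic_eq_zero_of_cubicRatio_eq [CharP F 2] {x y : F} (hx : x ^ 3 + x + 1 ≠ 0)
    (hy : y ^ 3 + y + 1 ≠ 0) (hne : x ≠ y) (h : cubicRatio x = cubicRatio y) :
    x ^ 2 * y ^ 2 + x ^ 2 * y + x * y ^ 2 + x * y + x + y + 1 = 0 := by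
  rw [cubicRatio, cubicRatio, div_eq_div_iff hx hy] at h
  have hs : x + y ≠ 0 := fun hs => hne (CharTwo.add_eq_zero.1 hs)
  refine (mul_eq_zero.1 ?_).resolve_left hs
  linear_combination (norm := (ring_nf; reduce_mod_char!)) h

theorem sq_add_self_eq_of_quartic_eq_zero [CharP F 2] {x y : F} (hs : x + y ≠ 0)
    (hQ : x ^ 2 * y ^ 2 + x ^ 2 * y + x * y ^ 2 + x * y + x + y + 1 = 0) :
    (x / (x + y)) ^ 2 + x / (x + y) =
      (x * y / ((x * y) ^ 2 + x * y + 1)) ^ 2 + x * y / ((x * y) ^ 2 + x * y + 1) := by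
  have hD : (x * y) ^ 2 + x * y + 1 = (x + y) * (x * y + 1) := by
    linear_combination (norm := (ring_nf; reduce_mod_char!)) hQ
  have hp : x * y + 1 ≠ 0 := fun hp => one_ne_zero <| by
    linear_combination hQ - (x * y + x + y) * hp
  have hw : (x / (x + y)) ^ 2 + x / (x + y) = x * y / (x + y) ^ 2 := by
    field_simp
    ring_nf; reduce_mod_char!
  have hv : (x * y / ((x + y) * (x * y + 1))) ^ 2 + x * y / ((x + y) * (x * y + 1)) =
      x * y / (x + y) ^ 2 := by
    field_simp
    linear_combination (norm := (ring_nf; reduce_mod_char!)) (x * y) * hQ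
  rw [hD, hw, hv]

variable (σ : F →+* F)

theorem cubicRatio_map_mul_self {x : F} (hx : σ x * x = 1) (hg : x ^ 3 + x + 1 ≠ 0)
    (hh : x ^ 3 + x ^ 2 + 1 ≠ 0) : σ (cubicRatio x) * cubicRatio x = 1 := by
  have hx₀ : x ≠ 0 := right_ne_zero_of_mul_eq_one hx
  have hnum : x⁻¹ ^ 3 + x⁻¹ ^ 2 + 1 = (x ^ 3 + x + 1) / x ^ 3 := by field_simp; ring
  have hden : x⁻¹ ^ 3 + x⁻¹ + 1 = (x ^ 3 + x ^ 2 + 1) / x ^ 3 := by field_simp; ring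
  simp only [cubicRatio, map_div₀, map_add, map_pow, map_one, eq_inv_of_mul_eq_one_left hx]
  rw [hnum, hden, div_div_div_cancel_right₀ (pow_ne_zero 3 hx₀), div_mul_div_comm,
    mul_comm (x ^ 3 + x + 1), div_self (mul_ne_zero hh hg)]

theorem map_div_add_eq_of_mul_self_eq_one {x y : F} (hx : σ x * x = 1) (hy : σ y * y = 1) :
    σ (x / (x + y)) = y / (x + y) := by
  have hx₀ : x ≠ 0 := right_ne_zero_of_mul_eq_one hx
  have hy₀ : y ≠ 0 := right_ne_zero_of_mul_eq_one hy
  simp only [map_div₀, map_add, eq_inv_of_mul_eq_one_left hx, eq_inv_of_mul_eq_one_left hy]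
  rw [inv_add_inv hx₀ hy₀]
  field_simp

theorem map_div_sq_add_self_add_one {p : F} (hp : σ p * p = 1) :
    σ (p / (p ^ 2 + p + 1)) = p / (p ^ 2 + p + 1) := by
  have hp₀ : p ≠ 0 := right_ne_zero_of_mul_eq_one hp
  have hden : p⁻¹ ^ 2 + p⁻¹ + 1 = (p ^ 2 + p + 1) / p ^ 2 := by field_simp; ring
  simp only [map_div₀, map_add, map_pow, map_one, eq_inv_of_mul_eq_one_left hp]
  rw [hden, div_div_eq_mul_div]
  field_simp

theorem eq_of_cubicRatio_eq [CharP F 2] {x y : F} (hx : σ x * x = 1) (hy : σ y * y = 1)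
    (hgx : x ^ 3 + x + 1 ≠ 0) (hgy : y ^ 3 + y + 1 ≠ 0) (h : cubicRatio x = cubicRatio y) :
    x = y := by
  by_contra hne
  have hs : x + y ≠ 0 := fun hs => hne (CharTwo.add_eq_zero.1 hs)
  have hAS := sq_add_self_eq_of_quartic_eq_zero hs
    (quartic_eq_zero_of_cubicRatio_eq hgx hgy hne h)
  have hw := map_eq_self_of_sq_add_self_eq σ hAS <|
    map_div_sq_add_self_add_one σ (by rw [map_mul, mul_mul_mul_comm, hx, hy, one_mul])
  rw [map_div_add_eq_of_mul_self_eq_one σ hx hy, div_left_inj' hs] at hw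
  exact hne hw.symm

theorem cubicRatio_bijOn [Finite F] [CharP F 2] (h7 : ∀ a : F, a ^ 7 = 1 → a = 1) :
    Set.BijOn cubicRatio {x | σ x * x = 1} {x | σ x * x = 1} := by
  have hg := cubics_ne_zero_of_pow_seven_eq_one h7
  have hmaps : Set.MapsTo cubicRatio {x | σ x * x = 1} {x | σ x * x = 1} := fun x hx =>
    cubicRatio_map_mul_self σ hx (hg x).1 (hg x).2
  exact ((Set.toFinite _).injOn_iff_bijOn_of_mapsTo hmaps).1 fun x hx y hy =>
    eq_of_cubicRatio_eq σ hx hy (hg x).1 (hg y).1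

end Field

theorem stmt_7_general (m : ℕ) (h3 : Nat.gcd 3 m = 1)
    (F : Type*) [Field F] [Fintype F] (hF : Fintype.card F = 2 ^ (2 * m)) :
    (∀ x : F, x ^ (2 ^ m + 1) = 1 → x ^ 3 + x + 1 ≠ 0) ∧
      Set.BijOn (fun x : F => (x ^ 3 + x ^ 2 + 1) / (x ^ 3 + x + 1))
        {x : F | x ^ (2 ^ m + 1) = 1} {x : F | x ^ (2 ^ m + 1) = 1} := by
  have : CharP F 2 := charP_of_card_eq_prime_pow hF
  have h7 : ∀ a : F, a ^ 7 = 1 → a = 1 := fun a =>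
    FiniteField.eq_one_of_pow_eq_one (by norm_num)
      (by rw [hF, pow_mul]; exact Nat.coprime_seven_four_pow_sub_one h3)
  have hU : {x : F | x ^ (2 ^ m + 1) = 1} = {x | iterateFrobenius F 2 m x * x = 1} := by
    ext x; simp [iterateFrobenius_def, pow_succ]
  refine ⟨fun x _ => (cubics_ne_zero_of_pow_seven_eq_one h7 x).1, ?_⟩
  rw [hU]
  exact cubicRatio_bijOn _ h7

theorem stmt_7 (m : ℕ) (hm : 0 < m) (h3 : Nat.gcd 3 m = 1)
    (F : Type*) [Field F] [Fintype F] (hF : Fintype.card F = 2 ^ (2 * m)) :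
    (∀ x : F, x ^ (2 ^ m + 1) = 1 → x ^ 3 + x + 1 ≠ 0) ∧
      Set.BijOn (fun x : F => (x ^ 3 + x ^ 2 + 1) / (x ^ 3 + x + 1))
        {x : F | x ^ (2 ^ m + 1) = 1} {x : F | x ^ (2 ^ m + 1) = 1} :=
  stmt_7_general m h3 F hF
end

section
/- Let m be a positive integer with gcd(3, m) = 1, and U the subgroup of order 2^m + 1 of F_{2^{2m}}^×. Then x ↦ x·(x^3 + x^2 + 1)/(x^3 + x + 1) is a well-defined bijection of U. -/
set_option maxHeartbeats 1000000 in
theorem stmt_8 (m : ℕ) (hm : 0 < m) (h3 : Nat.gcd 3 m = 1)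
    (F : Type*) [Field F] [Fintype F] (hF : Fintype.card F = 2 ^ (2 * m)) :
    (∀ x : F, x ^ (2 ^ m + 1) = 1 → x ^ 3 + x + 1 ≠ 0) ∧
      Set.BijOn (fun x : F => x * (x ^ 3 + x ^ 2 + 1) / (x ^ 3 + x + 1))
        {x : F | x ^ (2 ^ m + 1) = 1} {x : F | x ^ (2 ^ m + 1) = 1} := by
  classical
  -- characteristic 2
  obtain ⟨p, hp⟩ := CharP.exists F
  haveI := hp
  have hpprime : p.Prime := CharP.char_is_prime F p
  haveI : Fact p.Prime := ⟨hpprime⟩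
  obtain ⟨n, hnp, hn⟩ := FiniteField.card F p
  have hp2 : p = 2 := by
    have hdvd : p ∣ 2 ^ (2 * m) := by
      rw [← hF, hn]
      exact dvd_pow_self p (by exact_mod_cast n.pos.ne')
    have h2' := Nat.Prime.dvd_of_dvd_pow hpprime hdvd
    rcases (Nat.dvd_prime Nat.prime_two).mp h2' with h | h
    · exact absurd h hpprime.one_lt.ne'
    · exact h
  subst hp2
  have h2 : (2 : F) = 0 := by
    have := CharP.cast_eq_zero F 2
    exact_mod_cast this
  -- Frobenius
  have hfrob : ∀ a b : F, (a + b) ^ 2 ^ m = a ^ 2 ^ m + b ^ 2 ^ m := fun a b =>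
    add_pow_char_pow a b 2 m
  have hcard : ∀ a : F, (a ^ 2 ^ m) ^ 2 ^ m = a := by
    intro a
    rw [← pow_mul, ← pow_add, ← two_mul, ← hF]
    exact FiniteField.pow_card a
  have frob_d : ∀ z : F, (z ^ 3 + z + 1) ^ 2 ^ m = (z ^ 2 ^ m) ^ 3 + z ^ 2 ^ m + 1 := by
    intro z
    rw [hfrob (z ^ 3 + z) 1, hfrob (z ^ 3) z, one_pow, pow_right_comm]
  have frob_n : ∀ z : F, (z ^ 3 + z ^ 2 + 1) ^ 2 ^ m = (z ^ 2 ^ m) ^ 3 + (z ^ 2 ^ m) ^ 2 + 1 := by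
    intro z
    rw [hfrob (z ^ 3 + z ^ 2) 1, hfrob (z ^ 3) (z ^ 2), one_pow, pow_right_comm,
      pow_right_comm z 2]
  -- number theory
  have h3m : m % 3 = 1 ∨ m % 3 = 2 := by
    have hnd : ¬ (3 ∣ m) := by
      intro hd
      have : Nat.gcd 3 m = 3 := Nat.gcd_eq_left hd
      omega
    omega
  have h2m : 2 ≤ 2 ^ m := by
    calc 2 = 2 ^ 1 := (pow_one 2).symm
    _ ≤ 2 ^ m := Nat.pow_le_pow_right (by norm_num) hm
  have hpowmod : 2 ^ m % 7 = 2 ∨ 2 ^ m % 7 = 4 := by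
    have key : 2 ^ m % 7 = 2 ^ (m % 3) % 7 := by
      conv_lhs => rw [← Nat.div_add_mod m 3]
      rw [pow_add, pow_mul, Nat.mul_mod, Nat.pow_mod]
      norm_num
    rcases h3m with h | h <;> rw [h] at key <;> norm_num at key <;> omega
  have hco1 : Nat.gcd 7 (2 ^ m + 1) = 1 := by
    have h7 : Nat.Prime 7 := by norm_num
    have : ¬ (7 ∣ 2 ^ m + 1) := by rcases hpowmod with h | h <;> omega
    exact (Nat.Prime.coprime_iff_not_dvd h7).mpr this
  have hco2 : Nat.gcd 7 (2 ^ m - 1) = 1 := by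
    have h7 : Nat.Prime 7 := by norm_num
    have : ¬ (7 ∣ 2 ^ m - 1) := by rcases hpowmod with h | h <;> omega
    exact (Nat.Prime.coprime_iff_not_dvd h7).mpr this
  -- order arguments
  have key1 : ∀ t : F, t ^ 7 = 1 → t ^ (2 ^ m + 1) = 1 → t = 1 := by
    intro t h7 hq
    have hd := Nat.dvd_gcd (orderOf_dvd_of_pow_eq_one h7) (orderOf_dvd_of_pow_eq_one hq)
    rw [hco1] at hd
    exact orderOf_eq_one_iff.mp (Nat.dvd_one.mp hd)
  have key2 : ∀ t : F, t ^ 7 = 1 → t ^ 2 ^ m = t → t = 1 := by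
    intro t h7 hfx
    have ht0 : t ≠ 0 := by
      rintro rfl
      rw [zero_pow (by norm_num)] at h7
      exact zero_ne_one h7
    have hsub : 2 ^ m - 1 + 1 = 2 ^ m := by omega
    have hpw : t ^ (2 ^ m - 1) * t = 1 * t := by
      rw [← pow_succ, hsub, hfx, one_mul]
    have h1 : t ^ (2 ^ m - 1) = 1 := mul_right_cancel₀ ht0 hpw
    have hd := Nat.dvd_gcd (orderOf_dvd_of_pow_eq_one h7) (orderOf_dvd_of_pow_eq_one h1)
    rw [hco2] at hd
    exact orderOf_eq_one_iff.mp (Nat.dvd_one.mp hd)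
  -- the "degree 7" lemmas
  have seven1 : ∀ t : F, t ^ 3 + t + 1 = 0 → t ^ 7 = 1 := by
    intro t h
    linear_combination ((1)*t^4 + (-1)*t^2 + (-1)*t + (1)) * h + ((1)*t^2 + (-1)) * h2
  have seven2 : ∀ t : F, t ^ 3 + t ^ 2 + 1 = 0 → t ^ 7 = 1 := by
    intro t h
    linear_combination ((1)*t^4 + (-1)*t^3 + (1)*t^2 + (-2)*t + (3)) * h + ((-2)*t^2 + (1)*t + (-2)) * h2
  have three_ne : (3 : F) ≠ 0 := by
    intro hc
    have : (1 : F) = 0 := by linear_combination hc - h2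
    exact one_ne_zero this
  -- denominator and numerator nonvanishing on U
  have hden : ∀ x : F, x ^ (2 ^ m + 1) = 1 → x ^ 3 + x + 1 ≠ 0 := by
    intro x hx hc
    have h1 := key1 x (seven1 x hc) hx
    rw [h1] at hc
    exact three_ne (by linear_combination hc)
  have hnum : ∀ x : F, x ^ (2 ^ m + 1) = 1 → x ^ 3 + x ^ 2 + 1 ≠ 0 := by
    intro x hx hc
    have h1 := key1 x (seven2 x hc) hx
    rw [h1] at hc
    exact three_ne (by linear_combination hc)
  have hfix3 : ∀ t : F, t ^ 2 ^ m = t → t ^ 3 + t ^ 2 + 1 ≠ 0 := by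
    intro t ht hc
    have h1 := key2 t (seven2 t hc) ht
    rw [h1] at hc
    exact three_ne (by linear_combination hc)
  -- maps to
  have hmaps : ∀ x : F, x ^ (2 ^ m + 1) = 1 →
      (x * (x ^ 3 + x ^ 2 + 1) / (x ^ 3 + x + 1)) ^ (2 ^ m + 1) = 1 := by
    intro x hx
    have hdx := hden x hx
    have hx' : x ^ 2 ^ m * x = 1 := by rw [← pow_succ]; exact hx
    rw [div_pow]
    have hnumeq : (x * (x ^ 3 + x ^ 2 + 1)) ^ (2 ^ m + 1) = (x ^ 3 + x + 1) ^ (2 ^ m + 1) := by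
      rw [pow_succ (x * (x ^ 3 + x ^ 2 + 1)) (2 ^ m), pow_succ (x ^ 3 + x + 1) (2 ^ m), mul_pow, frob_n x, frob_d x]
      linear_combination ((1)*(x^(2^m))^3*x^3 + (1)*(x^(2^m))^3*x^2 + (1)*(x^(2^m))^3 + (1)*(x^(2^m))^2*x^3 + (1)*(x^(2^m))^2*x^2 + (1)*(x^(2^m))^2*x + (1)*(x^(2^m))*x^2 + (1)*(x^(2^m))*x + (1)*(x^(2^m)) + (1)*x^3 + (1)*x + (1)) * hx'
    rw [hnumeq, div_self (pow_ne_zero _ hdx)]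
  -- injectivity
  have hinj : ∀ x y : F, x ^ (2 ^ m + 1) = 1 → y ^ (2 ^ m + 1) = 1 →
      x * (x ^ 3 + x ^ 2 + 1) / (x ^ 3 + x + 1) = y * (y ^ 3 + y ^ 2 + 1) / (y ^ 3 + y + 1) →
      x = y := by
    intro x y hx hy heq
    have hdx := hden x hx
    have hnx := hnum x hx
    have hdy := hden y hy
    have hny := hnum y hy
    have hx0 : x ≠ 0 := by
      rintro rfl
      rw [zero_pow (by omega)] at hx
      exact zero_ne_one hx
    have hy0 : y ≠ 0 := by
      rintro rfl
      rw [zero_pow (by omega)] at hy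
      exact zero_ne_one hy
    rw [div_eq_div_iff hdx hdy] at heq
    have hx' : x ^ 2 ^ m * x = 1 := by rw [← pow_succ]; exact hx
    have hy' : y ^ 2 ^ m * y = 1 := by rw [← pow_succ]; exact hy
    set u := x + x ^ 2 ^ m with hud
    set v := y + y ^ 2 ^ m with hvd
    clear_value u v
    have hux : u * x = x ^ 2 + 1 := by rw [hud]; linear_combination hx'
    have hvy : v * y = y ^ 2 + 1 := by rw [hvd]; linear_combination hy'
    have hu : u ^ 2 ^ m = u := by rw [hud, hfrob, hcard]; ring
    have hv : v ^ 2 ^ m = v := by rw [hvd, hfrob, hcard]; ring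
    have hP4x : u ^ 4 * (x * (x ^ 3 + x ^ 2 + 1) * (x ^ 3 + x + 1)) =
        (x + 1) ^ 8 * (u ^ 3 + u ^ 2 + 1) := by
      linear_combination ((1)*u^3*x^6 + (1)*u^3*x^5 + (1)*u^3*x^4 + (3)*u^3*x^3 + (1)*u^3*x^2 + (1)*u^3*x + (1)*u^3 + (-7)*u^2*x^6 + (-26)*u^2*x^5 + (-52)*u^2*x^4 + (-68)*u^2*x^3 + (-52)*u^2*x^2 + (-26)*u^2*x + (-7)*u^2 + (-8)*u*x^7 + (-34)*u*x^6 + (-87)*u*x^5 + (-150)*u*x^4 + (-174)*u*x^3 + (-150)*u*x^2 + (-87)*u*x + (-34)*u + (-8)*x^8 + (-34)*x^7 + (-95)*x^6 + (-184)*x^5 + (-261)*x^4 + (-300)*x^3 + (-261)*x^2 + (-184)*x + (-87)) * hux + ((-4)*u^2 + (-17)*u + (-4)*x^10 + (-17)*x^9 + (-52)*x^8 + (-113)*x^7 + (-192)*x^6 + (-270)*x^5 + (-296)*x^4 + (-270)*x^3 + (-188)*x^2 + (-96)*x + (-44)) * h2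
    have hP4y : v ^ 4 * (y * (y ^ 3 + y ^ 2 + 1) * (y ^ 3 + y + 1)) =
        (y + 1) ^ 8 * (v ^ 3 + v ^ 2 + 1) := by
      linear_combination ((1)*v^3*y^6 + (1)*v^3*y^5 + (1)*v^3*y^4 + (3)*v^3*y^3 + (1)*v^3*y^2 + (1)*v^3*y + (1)*v^3 + (-7)*v^2*y^6 + (-26)*v^2*y^5 + (-52)*v^2*y^4 + (-68)*v^2*y^3 + (-52)*v^2*y^2 + (-26)*v^2*y + (-7)*v^2 + (-8)*v*y^7 + (-34)*v*y^6 + (-87)*v*y^5 + (-150)*v*y^4 + (-174)*v*y^3 + (-150)*v*y^2 + (-87)*v*y + (-34)*v + (-8)*y^8 + (-34)*y^7 + (-95)*y^6 + (-184)*y^5 + (-261)*y^4 + (-300)*y^3 + (-261)*y^2 + (-184)*y + (-87)) * hvy + ((-4)*v^2 + (-17)*v + (-4)*y^10 + (-17)*y^9 + (-52)*y^8 + (-113)*y^7 + (-192)*y^6 + (-270)*y^5 + (-296)*y^4 + (-270)*y^3 + (-188)*y^2 + (-96)*y + (-44)) * h2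
    have hP5 : (x + 1) ^ 8 * (y * (y ^ 3 + y ^ 2 + 1) * (y ^ 3 + y + 1)) =
        (y + 1) ^ 8 * (x * (x ^ 3 + x ^ 2 + 1) * (x ^ 3 + x + 1)) := by
      linear_combination ((1)*x^4*y^4 + (1)*x^4*y^3 + (1)*x^4*y + (1)*x^3*y^4 + (-20)*x^3*y^3 + (-48)*x^3*y^2 + (-28)*x^3*y + (19)*x^3 + (-48)*x^2*y^3 + (-56)*x^2*y^2 + (80)*x^2*y + (96)*x^2 + (1)*x*y^4 + (-28)*x*y^3 + (80)*x*y^2 + (220)*x*y + (-5)*x + (19)*y^3 + (96)*y^2 + (-5)*y + (-165)) * heq + ((28)*x^7*y^2 + (4)*x^7*y + (-10)*x^7 + (12)*x^6*y^2 + (-64)*x^6*y + (-58)*x^6 + (-108)*x^5*y^2 + (-124)*x^5*y + (-46)*x^5 + (-68)*x^4*y^2 + (12)*x^4*y + (74)*x^4 + (-20)*x^3*y^2 + (-4)*x^3*y + (34)*x^3 + (-28)*x^2*y^7 + (-12)*x^2*y^6 + (108)*x^2*y^5 + (68)*x^2*y^4 + (20)*x^2*y^3 + (-52)*x^2*y +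 (2)*x^2 + (-4)*x*y^7 + (64)*x*y^6 + (124)*x*y^5 + (-12)*x*y^4 + (4)*x*y^3 + (52)*x*y^2 + (82)*x + (10)*y^7 + (58)*y^6 + (46)*y^5 + (-74)*y^4 + (-34)*y^3 + (-2)*y^2 + (-82)*y) * h2
    have hDx : x * (x ^ 3 + x ^ 2 + 1) * (x ^ 3 + x + 1) ≠ 0 :=
      mul_ne_zero (mul_ne_zero hx0 hnx) hdx
    have hDy : y * (y ^ 3 + y ^ 2 + 1) * (y ^ 3 + y + 1) ≠ 0 :=
      mul_ne_zero (mul_ne_zero hy0 hny) hdy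
    have hP6 : u ^ 4 * (v ^ 3 + v ^ 2 + 1) = v ^ 4 * (u ^ 3 + u ^ 2 + 1) := by
      have hcan : u ^ 4 * (v ^ 3 + v ^ 2 + 1) *
          (x * (x ^ 3 + x ^ 2 + 1) * (x ^ 3 + x + 1) *
            (y * (y ^ 3 + y ^ 2 + 1) * (y ^ 3 + y + 1))) =
          v ^ 4 * (u ^ 3 + u ^ 2 + 1) *
          (x * (x ^ 3 + x ^ 2 + 1) * (x ^ 3 + x + 1) *
            (y * (y ^ 3 + y ^ 2 + 1) * (y ^ 3 + y + 1))) := by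
        linear_combination ((v ^ 3 + v ^ 2 + 1) * (y * (y ^ 3 + y ^ 2 + 1) * (y ^ 3 + y + 1))) * hP4x -
          ((u ^ 3 + u ^ 2 + 1) * (x * (x ^ 3 + x ^ 2 + 1) * (x ^ 3 + x + 1))) * hP4y +
          ((u ^ 3 + u ^ 2 + 1) * (v ^ 3 + v ^ 2 + 1)) * hP5
      exact mul_right_cancel₀ (mul_ne_zero hDx hDy) hcan
    have huv : u = v := by
      by_contra hne
      have hw : u + v ≠ 0 := fun h0 => hne (by linear_combination h0 - v * h2)
      have hbig : (u + v) * ((u * v) ^ 3 + (u * v) ^ 2 * (u + v) + (u + v) ^ 3) = 0 := by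
        linear_combination hP6 + (u^3*v^4 + u^3*v^3 + 2*u^3*v + u^2*v^4 + 3*u^2*v^2 + 2*u*v^3 + v^4) * h2
      have hz : (u * v) ^ 3 + (u * v) ^ 2 * (u + v) + (u + v) ^ 3 = 0 := by
        rcases mul_eq_zero.mp hbig with h | h
        · exact absurd h hw
        · exact h
      have htf : (u * v * (u + v)⁻¹) ^ 2 ^ m = u * v * (u + v)⁻¹ := by
        rw [mul_pow, mul_pow, inv_pow, hu, hv, hfrob, hu, hv]
      have ht3 : (u * v * (u + v)⁻¹) ^ 3 + (u * v * (u + v)⁻¹) ^ 2 + 1 = 0 := by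
        have expand : (u * v * (u + v)⁻¹) ^ 3 + (u * v * (u + v)⁻¹) ^ 2 + 1 =
            ((u * v) ^ 3 + (u * v) ^ 2 * (u + v) + (u + v) ^ 3) * ((u + v)⁻¹) ^ 3 := by
          field_simp
        rw [expand, hz, zero_mul]
      exact hfix3 _ htf ht3
    have hxy : (x + y) * (x * y + 1) = 0 := by
      have hvy' : u * y = y ^ 2 + 1 := by rw [huv]; exact hvy
      linear_combination y * hux - x * hvy' + (x^2*y + y) * h2
    rcases mul_eq_zero.mp hxy with h | h
    · linear_combination h - y * h2
    · have hxy1 : x * y = 1 := by linear_combination h - h2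
      have h8 : (x + 1) ^ 8 = 0 := by
        linear_combination (x^4) * heq + ((-1)*x^7*y^2 + (-1)*x^7 + (1)*x^6*y^3 + (-1)*x^6*y + (1)*x^5*y^2 + (-1)*x^5 + (1)*x^4*y^3 + (1)*x^4*y + (1)*x^3*y^3 + (2)*x^3*y^2 + (2)*x^3 + (1)*x^2*y^2 + (2)*x^2*y + (1)*x*y + (2)*x + (1)) * hxy1 + ((3)*x^7 + (14)*x^6 + (27)*x^5 + (35)*x^4 + (29)*x^3 + (14)*x^2 + (5)*x + (1)) * h2
      have hx1 : x = 1 := by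
        have h0 : x + 1 = 0 := pow_eq_zero_iff (by norm_num : (8:ℕ) ≠ 0) |>.mp h8
        linear_combination h0 - h2
      have hy1 : y = 1 := by
        rw [hx1, one_mul] at hxy1
        exact hxy1
      rw [hx1, hy1]
  -- assemble
  refine ⟨hden, ?_⟩
  have hfin : ({x : F | x ^ (2 ^ m + 1) = 1} : Set F).Finite := Set.toFinite _
  have hmt : Set.MapsTo (fun x : F => x * (x ^ 3 + x ^ 2 + 1) / (x ^ 3 + x + 1))
      {x : F | x ^ (2 ^ m + 1) = 1} {x : F | x ^ (2 ^ m + 1) = 1} := by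
    intro x hxmem
    exact hmaps x hxmem
  refine (Set.Finite.injOn_iff_bijOn_of_mapsTo hfin hmt).mp ?_
  intro x hxmem y hymem heq
  exact hinj x y hxmem hymem heq
end

section
/- Let n = 2m with m > 0, let i, j be distinct positive integers, u an integer, I = 2^i, J = 2^j. Set d_1 = 2^{i−1} − 2^{j−1} + u(2^m + 1), d_2 = 2^{i−1} + 2^{j−1} + (u − 2^{j−1})(2^m + 1), d_3 = −(2^{i−1} + 2^{j−1}) + (u + 2^{i−1})(2^m + 1). If gcd(d_1, 2^{2m} − 1) = 1 and gcd(2^i − 2^j, 2^m + 1) = 1, then x^{d_1} + x^{d_2} + x^{d_3} is a permutation polynomial of F_{2^{2m}}. -/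
/-! Write `q = 2^m`, `a = 2^k`, `b = 2^l` and `x̄ = x^q`, an involution of `F = 𝔽_{q²}` fixing
`𝔽_q`. For `x ≠ 0` the trinomial factors as `x^((u - b)(q + 1)) · T x` with
`T x = x^a x̄^b + x^(a+b) + x̄^(a+b)`; the first factor is a power of the norm, so it lies in
`𝔽_q`, and `T` is `𝔽_q`-homogeneous of degree `a + b`. Hence `f x = f y` gives `T x = c · T y`
with `c ∈ 𝔽_q`, and the heart of the proof is that this forces `x / y ∈ 𝔽_q`. Writing an element
outside `𝔽_q` as `s γ` with `s ∈ 𝔽_q` and `γ̄ = γ + 1`, this amounts to the injectivity of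
`T̄ / T` on the line `γ + 𝔽_q`: a collision at `γ` and `γ + t`, `t ≠ 0`, yields
`ρ = (γ² + γ + 1) / t + γ` with `ρ^a = ρ^b` and `ρ̄ = ρ + 1`, which the coprimality of `a - b`
and `q + 1` rules out. Finally `x = w y` with `w ∈ 𝔽_q` gives `f x = w^d₁ f y`, and
`gcd(d₁, q² - 1) = 1` forces `w = 1`. -/

lemma zpow_eq_one_of_isCoprime {G₀ : Type*} [GroupWithZero G₀] {g : G₀} (hg : g ≠ 0)
    {e n k : ℤ} (hen : IsCoprime e n) (he : g ^ e = 1) (hn : g ^ (n * k) = 1) : g ^ k = 1 := by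
  obtain ⟨α, β, hαβ⟩ := hen
  calc g ^ k = g ^ (e * (α * k) + n * k * β) := by congr 1; linear_combination (-k) * hαβ
    _ = 1 := by
      rw [zpow_add₀ hg, zpow_mul g e, zpow_mul g (n * k), he, hn, one_zpow, one_zpow, one_mul]

lemma injective_ite_eq_zero {α β : Type*} [Zero α] [Zero β] [∀ x : α, Decidable (x = 0)]
    {f : α → β} (hf : Set.InjOn f {0}ᶜ) (hf0 : ∀ x, x ≠ 0 → f x ≠ 0) :
    Function.Injective (fun x ↦ if x = 0 then 0 else f x) := by
  intro x y hxy
  by_cases hx : x = 0 <;> by_cases hy : y = 0 <;> simp only [hx, hy, if_true, if_false] at hxy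
  · rw [hx, hy]
  · exact absurd hxy.symm (hf0 y hy)
  · exact absurd hxy (hf0 x hx)
  · exact hf hx hy hxy

lemma FiniteField.pow_toNat_emod_card_sub_one {K : Type*} [Field K] [Fintype K] {x : K}
    (hx : x ≠ 0) (d : ℤ) : x ^ (d % ((Fintype.card K : ℤ) - 1)).toNat = x ^ d := by
  have hN : x ^ ((Fintype.card K : ℤ) - 1) = 1 := by
    rw [zpow_sub_one₀ hx, zpow_natCast, FiniteField.pow_card, mul_inv_cancel₀ hx]
  have h0 : 0 ≤ d % ((Fintype.card K : ℤ) - 1) :=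
    Int.emod_nonneg _ (by have := Fintype.one_lt_card (α := K); omega)
  rw [← zpow_natCast, Int.toNat_of_nonneg h0]
  conv_rhs => rw [← Int.emod_add_mul_ediv d ((Fintype.card K : ℤ) - 1)]
  rw [zpow_add₀ hx, zpow_mul, hN, one_zpow, mul_one]

def conjTrinomial {R : Type*} [CommRing R] (q a b : ℕ) (x : R) : R :=
  x ^ a * (x ^ q) ^ b + x ^ (a + b) + (x ^ q) ^ (a + b)

-- The exponents of the statement, with `k = i - 1` and `l = j - 1`; for `x ≠ 0`, `zpow` reads
-- them modulo `2^(2m) - 1` (`FiniteField.pow_toNat_emod_card_sub_one`).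
def trinomial {F : Type*} [Field F] (k l m : ℕ) (u : ℤ) (x : F) : F :=
  x ^ ((2 : ℤ) ^ k - 2 ^ l + u * (2 ^ m + 1)) +
    x ^ ((2 : ℤ) ^ k + 2 ^ l + (u - 2 ^ l) * (2 ^ m + 1)) +
      x ^ (-((2 : ℤ) ^ k + 2 ^ l) + (u + 2 ^ k) * (2 ^ m + 1))

section CommRing

variable {R : Type*} [CommRing R] {q a b m k l : ℕ}

local notation "T" => conjTrinomial (2 ^ m) (2 ^ k) (2 ^ l)

lemma conjTrinomial_mul_of_pow_eq_self {s : R} (hs : s ^ q = s) (x : R) :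
    conjTrinomial q a b (s * x) = s ^ (a + b) * conjTrinomial q a b x := by
  simp only [conjTrinomial, mul_pow, hs]
  ring

variable [CharP R 2]

lemma conjTrinomial_of_pow_eq_self {x : R} (hx : x ^ q = x) :
    conjTrinomial q a b x = x ^ (a + b) := by
  simp only [conjTrinomial, hx, ← pow_add]
  linear_combination x ^ (a + b) * CharTwo.two_eq_zero (R := R)

lemma conjTrinomial_pow_add_self (hσ : ∀ x : R, (x ^ 2 ^ m) ^ 2 ^ m = x) (x : R) :
    conjTrinomial (2 ^ m) a b x ^ 2 ^ m + conjTrinomial (2 ^ m) a b x =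
      x ^ a * (x ^ 2 ^ m) ^ b + (x ^ 2 ^ m) ^ a * x ^ b := by
  simp only [conjTrinomial, add_pow_char_pow, mul_pow, pow_right_comm _ _ (2 ^ m), hσ]
  linear_combination (x ^ (a + b) + (x ^ 2 ^ m) ^ (a + b)) * CharTwo.two_eq_zero (R := R)

lemma conjTrinomial_of_pow_eq_add_one {δ : R} (hδ : δ ^ 2 ^ m = δ + 1) :
    T δ = δ ^ 2 ^ k * δ ^ 2 ^ l + δ ^ 2 ^ l + 1 := by
  simp only [conjTrinomial, hδ, pow_add, add_pow_char_pow, one_pow]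
  linear_combination (δ ^ 2 ^ k * δ ^ 2 ^ l + δ ^ 2 ^ k) * CharTwo.two_eq_zero (R := R)

lemma conjTrinomial_pow_of_pow_eq_add_one {δ : R} (hδ : δ ^ 2 ^ m = δ + 1) :
    T δ ^ 2 ^ m = δ ^ 2 ^ k * δ ^ 2 ^ l + δ ^ 2 ^ k + 1 := by
  simp only [conjTrinomial_of_pow_eq_add_one hδ, add_pow_char_pow, mul_pow, one_pow,
    pow_right_comm _ _ (2 ^ m), hδ]
  linear_combination (δ ^ 2 ^ l + 1) * CharTwo.two_eq_zero (R := R)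

end CommRing

section Field

variable {F : Type*} [Field F] {m k l : ℕ}

local notation "T" => conjTrinomial (2 ^ m) (2 ^ k) (2 ^ l)

lemma zpow_two_pow_two_mul_sub_one_eq_one (hσ : ∀ x : F, (x ^ 2 ^ m) ^ 2 ^ m = x) {x : F}
    (hx : x ≠ 0) : x ^ ((2 : ℤ) ^ (2 * m) - 1) = 1 := by
  have hx' : x ^ 2 ^ (2 * m) = x := by rw [pow_mul', sq, pow_mul, hσ]
  rw [zpow_sub_one₀ hx, show (2 : ℤ) ^ (2 * m) = ((2 ^ (2 * m) : ℕ) : ℤ) by push_cast; rfl,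
    zpow_natCast, hx', mul_inv_cancel₀ hx]

lemma pow_two_pow_eq_self_of_pow_eq_pow (hσ : ∀ x : F, (x ^ 2 ^ m) ^ 2 ^ m = x) {a b : ℕ}
    (hab : IsCoprime ((a : ℤ) - b) (2 ^ m + 1)) {v : F} (hv : v ≠ 0) (h : v ^ a = v ^ b) :
    v ^ 2 ^ m = v := by
  have he : v ^ ((a : ℤ) - b) = 1 := by
    rw [zpow_sub₀ hv, zpow_natCast, zpow_natCast, h, div_self (pow_ne_zero _ hv)]
  have hn : v ^ (((2 : ℤ) ^ m + 1) * (2 ^ m - 1)) = 1 := by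
    rw [show ((2 : ℤ) ^ m + 1) * (2 ^ m - 1) = 2 ^ (2 * m) - 1 by ring]
    exact zpow_two_pow_two_mul_sub_one_eq_one hσ hv
  have h1 := zpow_eq_one_of_isCoprime hv hab he hn
  rw [zpow_sub_one₀ hv, mul_inv_eq_one₀ hv] at h1
  exact_mod_cast h1

lemma trinomial_eq_zpow_mul_conjTrinomial (u : ℤ) {x : F} (hx : x ≠ 0) :
    trinomial k l m u x = x ^ ((u - 2 ^ l) * (2 ^ m + 1)) * T x := by
  have e₁ : (2 : ℤ) ^ k - 2 ^ l + u * (2 ^ m + 1) =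
      (u - 2 ^ l) * (2 ^ m + 1) + ((2 ^ k + 2 ^ m * 2 ^ l : ℕ) : ℤ) := by push_cast; ring
  have e₂ : (2 : ℤ) ^ k + 2 ^ l + (u - 2 ^ l) * (2 ^ m + 1) =
      (u - 2 ^ l) * (2 ^ m + 1) + ((2 ^ k + 2 ^ l : ℕ) : ℤ) := by push_cast; ring
  have e₃ : -((2 : ℤ) ^ k + 2 ^ l) + (u + 2 ^ k) * (2 ^ m + 1) =
      (u - 2 ^ l) * (2 ^ m + 1) + ((2 ^ m * (2 ^ k + 2 ^ l) : ℕ) : ℤ) := by push_cast; ring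
  rw [trinomial, e₁, e₂, e₃, zpow_add₀ hx, zpow_add₀ hx, zpow_add₀ hx, zpow_natCast,
    zpow_natCast, zpow_natCast, conjTrinomial, pow_add, pow_mul, pow_mul]
  ring

lemma trinomial_mul_of_pow_eq_self (u : ℤ) {w : F} (hw0 : w ≠ 0) (hw : w ^ 2 ^ m = w) (y : F) :
    trinomial k l m u (w * y) =
      w ^ ((2 : ℤ) ^ k - 2 ^ l + u * (2 ^ m + 1)) * trinomial k l m u y := by
  have hw1 : w ^ ((2 : ℤ) ^ m - 1) = 1 := by
    rw [zpow_sub_one₀ hw0, show (2 : ℤ) ^ m = ((2 ^ m : ℕ) : ℤ) by push_cast; rfl, zpow_natCast,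
      hw, mul_inv_cancel₀ hw0]
  have hshift : ∀ d n : ℤ, w ^ (d + (2 ^ m - 1) * n) = w ^ d := fun d n ↦ by
    rw [zpow_add₀ hw0, zpow_mul, hw1, one_zpow, mul_one]
  rw [trinomial, trinomial, mul_zpow, mul_zpow, mul_zpow,
    show (2 : ℤ) ^ k + 2 ^ l + (u - 2 ^ l) * (2 ^ m + 1) =
      2 ^ k - 2 ^ l + u * (2 ^ m + 1) + (2 ^ m - 1) * (- 2 ^ l) by ring,
    show -((2 : ℤ) ^ k + 2 ^ l) + (u + 2 ^ k) * (2 ^ m + 1) =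
      2 ^ k - 2 ^ l + u * (2 ^ m + 1) + (2 ^ m - 1) * 2 ^ k by ring, hshift, hshift]
  ring

variable [CharP F 2]

lemma pow_two_pow_eq_self_of_mul_eq_mul (hσ : ∀ x : F, (x ^ 2 ^ m) ^ 2 ^ m = x) {a b : ℕ}
    (hab : IsCoprime ((a : ℤ) - b) (2 ^ m + 1)) {x : F} (hx : x ≠ 0)
    (h : x ^ a * (x ^ 2 ^ m) ^ b = (x ^ 2 ^ m) ^ a * x ^ b) : x ^ 2 ^ m = x := by
  have hx' : x ^ 2 ^ m ≠ 0 := pow_ne_zero _ hx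
  have hv := pow_two_pow_eq_self_of_pow_eq_pow hσ hab (div_ne_zero hx' hx) (by
    rw [div_pow, div_pow, div_eq_div_iff (pow_ne_zero _ hx) (pow_ne_zero _ hx)]
    linear_combination -h)
  rw [div_pow, hσ, div_eq_div_iff hx' hx] at hv
  exact frobenius_inj F 2 (by simp only [frobenius_def, sq]; exact hv.symm)

lemma conjTrinomial_pow_eq_self_iff (hσ : ∀ x : F, (x ^ 2 ^ m) ^ 2 ^ m = x) {a b : ℕ}
    (hab : IsCoprime ((a : ℤ) - b) (2 ^ m + 1)) {x : F} (hx : x ≠ 0) :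
    conjTrinomial (2 ^ m) a b x ^ 2 ^ m = conjTrinomial (2 ^ m) a b x ↔ x ^ 2 ^ m = x := by
  refine ⟨fun h ↦ pow_two_pow_eq_self_of_mul_eq_mul hσ hab hx ?_, fun h ↦ ?_⟩
  · have h2 := conjTrinomial_pow_add_self (a := a) (b := b) hσ x
    rw [h, CharTwo.add_self_eq_zero] at h2
    exact CharTwo.add_eq_zero.mp h2.symm
  · rw [conjTrinomial_of_pow_eq_self h, pow_right_comm, h]

lemma conjTrinomial_ne_zero (hσ : ∀ x : F, (x ^ 2 ^ m) ^ 2 ^ m = x) {a b : ℕ}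
    (hab : IsCoprime ((a : ℤ) - b) (2 ^ m + 1)) {x : F} (hx : x ≠ 0) :
    conjTrinomial (2 ^ m) a b x ≠ 0 := by
  intro h0
  have hfix := (conjTrinomial_pow_eq_self_iff hσ hab hx).mp (by rw [h0, zero_pow (by positivity)])
  rw [conjTrinomial_of_pow_eq_self hfix] at h0
  exact pow_ne_zero _ hx h0

lemma exists_eq_mul_of_pow_two_pow_ne_self (hσ : ∀ x : F, (x ^ 2 ^ m) ^ 2 ^ m = x) {x : F}
    (hx : x ^ 2 ^ m ≠ x) :
    ∃ s γ : F, s ≠ 0 ∧ s ^ 2 ^ m = s ∧ γ ^ 2 ^ m = γ + 1 ∧ x = s * γ := by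
  have hs : x + x ^ 2 ^ m ≠ 0 := fun h ↦ hx (CharTwo.add_eq_zero.mp h).symm
  refine ⟨x + x ^ 2 ^ m, x / (x + x ^ 2 ^ m), hs, by rw [add_pow_char_pow, hσ, add_comm], ?_,
    by field_simp⟩
  rw [div_pow, add_pow_char_pow, hσ, add_comm (x ^ 2 ^ m) x]
  field_simp
  linear_combination -x * CharTwo.two_eq_zero (R := F)

lemma eq_zero_of_conjTrinomial_pow_mul_eq (hσ : ∀ x : F, (x ^ 2 ^ m) ^ 2 ^ m = x)
    (hkl : IsCoprime ((2 : ℤ) ^ k - 2 ^ l) (2 ^ m + 1)) {γ t : F} (hγ : γ ^ 2 ^ m = γ + 1)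
    (ht : t ^ 2 ^ m = t) (h : T γ ^ 2 ^ m * T (γ + t) = T (γ + t) ^ 2 ^ m * T γ) : t = 0 := by
  by_contra ht0
  have two : (2 : F) = 0 := CharTwo.two_eq_zero
  have hγt : (γ + t) ^ 2 ^ m = γ + t + 1 := by rw [add_pow_char_pow, hγ, ht]; ring
  rw [conjTrinomial_pow_of_pow_eq_add_one hγ, conjTrinomial_of_pow_eq_add_one hγ,
    conjTrinomial_pow_of_pow_eq_add_one hγt, conjTrinomial_of_pow_eq_add_one hγt,
    add_pow_char_pow, add_pow_char_pow] at h
  set c := (γ * (γ + 1) + 1) / t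
  have hcq : c ^ 2 ^ m = c := by
    rw [div_pow, ht, add_pow_char_pow, mul_pow, add_pow_char_pow, hγ, one_pow]
    congr 1
    linear_combination (γ + 1) * two
  have hρq : (c + γ) ^ 2 ^ m = c + γ + 1 := by rw [add_pow_char_pow, hcq, hγ]; ring
  have hρ0 : c + γ ≠ 0 := fun h0 ↦ by
    rw [h0, zero_pow (by positivity), zero_add] at hρq
    exact zero_ne_one hρq
  have htc : ∀ n : ℕ, t ^ 2 ^ n * c ^ 2 ^ n = γ ^ 2 ^ n * (γ ^ 2 ^ n + 1) + 1 := fun n ↦ by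
    rw [← mul_pow, mul_div_cancel₀ _ ht0, add_pow_char_pow, mul_pow, add_pow_char_pow, one_pow]
  have hρ : (c + γ) ^ 2 ^ k = (c + γ) ^ 2 ^ l := by
    refine mul_left_cancel₀ (mul_ne_zero (pow_ne_zero (2 ^ k) ht0) (pow_ne_zero (2 ^ l) ht0)) ?_
    rw [add_pow_char_pow, add_pow_char_pow]
    linear_combination t ^ 2 ^ l * htc k - t ^ 2 ^ k * htc l + h
  have hfix := pow_two_pow_eq_self_of_pow_eq_pow hσ (by exact_mod_cast hkl) hρ0 hρ
  rw [hρq] at hfix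
  exact one_ne_zero (add_eq_left.mp hfix)

lemma div_pow_two_pow_eq_self_of_conjTrinomial_eq_mul (hσ : ∀ x : F, (x ^ 2 ^ m) ^ 2 ^ m = x)
    (hkl : IsCoprime ((2 : ℤ) ^ k - 2 ^ l) (2 ^ m + 1)) {x z c : F} (hx : x ≠ 0) (hz : z ≠ 0)
    (hc : c ^ 2 ^ m = c) (h : T x = c * T z) : (x / z) ^ 2 ^ m = x / z := by
  have hab : IsCoprime (((2 ^ k : ℕ) : ℤ) - (2 ^ l : ℕ)) (2 ^ m + 1) := by exact_mod_cast hkl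
  have hc0 : c ≠ 0 := by
    rintro rfl
    exact conjTrinomial_ne_zero hσ hab hx (by rw [h, zero_mul])
  have hTq : T x ^ 2 ^ m = c * T z ^ 2 ^ m := by rw [h, mul_pow, hc]
  have hfix_iff : x ^ 2 ^ m = x ↔ z ^ 2 ^ m = z := by
    rw [← conjTrinomial_pow_eq_self_iff hσ hab hx, ← conjTrinomial_pow_eq_self_iff hσ hab hz,
      hTq, h, mul_right_inj' hc0]
  by_cases hzq : z ^ 2 ^ m = z
  · rw [div_pow, hzq, hfix_iff.mpr hzq]
  obtain ⟨s, γ, hs0, hs, hγ, rfl⟩ := exists_eq_mul_of_pow_two_pow_ne_self hσ (hfix_iff.not.mpr hzq)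
  obtain ⟨r, γ', hr0, hr, hγ', rfl⟩ := exists_eq_mul_of_pow_two_pow_ne_self hσ hzq
  have hcross := calc
    s ^ (2 ^ k + 2 ^ l) * r ^ (2 ^ k + 2 ^ l) * (T γ ^ 2 ^ m * T (γ + (γ' - γ)))
      = T (s * γ) ^ 2 ^ m * T (r * γ') := by
        rw [add_sub_cancel, conjTrinomial_mul_of_pow_eq_self hs,
          conjTrinomial_mul_of_pow_eq_self hr, mul_pow, pow_right_comm, hs]
        ring
    _ = T (r * γ') ^ 2 ^ m * T (s * γ) := by rw [hTq, h]; ring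
    _ = s ^ (2 ^ k + 2 ^ l) * r ^ (2 ^ k + 2 ^ l) * (T (γ + (γ' - γ)) ^ 2 ^ m * T γ) := by
        rw [add_sub_cancel, conjTrinomial_mul_of_pow_eq_self hs,
          conjTrinomial_mul_of_pow_eq_self hr, mul_pow, pow_right_comm, hr]
        ring
  have hγγ' := eq_zero_of_conjTrinomial_pow_mul_eq hσ hkl hγ
    (by rw [sub_pow_char_pow, hγ, hγ']; ring)
    (mul_left_cancel₀ (mul_ne_zero (pow_ne_zero _ hs0) (pow_ne_zero _ hr0)) hcross)
  rw [sub_eq_zero.mp hγγ', mul_div_mul_right _ _ (right_ne_zero_of_mul hx), div_pow, hs, hr]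

lemma trinomial_ne_zero (hσ : ∀ x : F, (x ^ 2 ^ m) ^ 2 ^ m = x)
    (hkl : IsCoprime ((2 : ℤ) ^ k - 2 ^ l) (2 ^ m + 1)) (u : ℤ) {x : F} (hx : x ≠ 0) :
    trinomial k l m u x ≠ 0 := by
  rw [trinomial_eq_zpow_mul_conjTrinomial u hx]
  exact mul_ne_zero (zpow_ne_zero _ hx) (conjTrinomial_ne_zero hσ (by exact_mod_cast hkl) hx)

lemma trinomial_injOn (hσ : ∀ x : F, (x ^ 2 ^ m) ^ 2 ^ m = x)
    (hkl : IsCoprime ((2 : ℤ) ^ k - 2 ^ l) (2 ^ m + 1)) {u : ℤ}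
    (hd : IsCoprime ((2 : ℤ) ^ k - 2 ^ l + u * (2 ^ m + 1)) (2 ^ (2 * m) - 1)) :
    Set.InjOn (trinomial k l m u) ({0}ᶜ : Set F) := by
  intro x hx y hy hxy
  rw [Set.mem_compl_singleton_iff] at hx hy
  have hnorm : ∀ z : F, (z ^ ((u - 2 ^ l) * (2 ^ m + 1))) ^ 2 ^ m =
      z ^ ((u - 2 ^ l) * (2 ^ m + 1)) := by
    intro z
    rw [mul_comm, zpow_mul, ← zpow_natCast, ← zpow_mul, mul_comm, zpow_mul, zpow_natCast]
    congr 1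
    rw [show (2 : ℤ) ^ m + 1 = ((2 ^ m + 1 : ℕ) : ℤ) by push_cast; rfl, zpow_natCast, ← pow_mul,
      add_one_mul, pow_add, pow_mul, hσ, mul_comm, ← pow_succ]
  have hT : T x = (y ^ ((u - 2 ^ l) * (2 ^ m + 1)) / x ^ ((u - 2 ^ l) * (2 ^ m + 1))) * T y := by
    rw [trinomial_eq_zpow_mul_conjTrinomial u hx, trinomial_eq_zpow_mul_conjTrinomial u hy] at hxy
    field_simp
    linear_combination hxy
  have hw := div_pow_two_pow_eq_self_of_conjTrinomial_eq_mul hσ hkl hx hy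
    (by rw [div_pow, hnorm, hnorm]) hT
  have hd1 : (x / y) ^ ((2 : ℤ) ^ k - 2 ^ l + u * (2 ^ m + 1)) = 1 := by
    have h := trinomial_mul_of_pow_eq_self (k := k) (l := l) u (div_ne_zero hx hy) hw y
    rw [div_mul_cancel₀ x hy, hxy] at h
    exact (mul_eq_right₀ (trinomial_ne_zero hσ hkl u hy)).mp h.symm
  have h1 := zpow_eq_one_of_isCoprime (k := 1) (div_ne_zero hx hy) hd hd1
    (by rw [mul_one]; exact zpow_two_pow_two_mul_sub_one_eq_one hσ (div_ne_zero hx hy))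
  rwa [zpow_one, div_eq_one_iff_eq hy] at h1

end Field

open scoped Classical in
theorem stmt_10_general (m : ℕ) (i j : ℕ) (hi : 0 < i) (hj : 0 < j)
    (u : ℤ)
    (d₁ d₂ d₃ : ℤ)
    (hd₁ : d₁ = 2 ^ (i - 1) - 2 ^ (j - 1) + u * (2 ^ m + 1))
    (hd₂ : d₂ = 2 ^ (i - 1) + 2 ^ (j - 1) + (u - 2 ^ (j - 1)) * (2 ^ m + 1))
    (hd₃ : d₃ = -(2 ^ (i - 1) + 2 ^ (j - 1)) + (u + 2 ^ (i - 1)) * (2 ^ m + 1))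
    (hgcd1 : Int.gcd d₁ (2 ^ (2 * m) - 1) = 1)
    (hgcd2 : Int.gcd (2 ^ i - 2 ^ j) (2 ^ m + 1) = 1)
    (F : Type*) [Field F] [Fintype F] (hF : Fintype.card F = 2 ^ (2 * m)) :
    Function.Bijective (fun x : F =>
      if x = 0 then 0 else
        x ^ (d₁ % (2 ^ (2 * m) - 1)).toNat + x ^ (d₂ % (2 ^ (2 * m) - 1)).toNat +
          x ^ (d₃ % (2 ^ (2 * m) - 1)).toNat) := by
  obtain ⟨i, rfl⟩ : ∃ i', i = i' + 1 := ⟨i - 1, by omega⟩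
  obtain ⟨j, rfl⟩ : ∃ j', j = j' + 1 := ⟨j - 1, by omega⟩
  simp only [Nat.add_sub_cancel] at hd₁ hd₂ hd₃
  subst hd₁ hd₂ hd₃
  have : CharP F 2 := charP_of_card_eq_prime_pow hF
  have hσ : ∀ x : F, (x ^ 2 ^ m) ^ 2 ^ m = x := fun x ↦ by
    rw [← pow_mul, ← pow_add, ← two_mul, ← hF, FiniteField.pow_card]
  have hcop : IsCoprime ((2 : ℤ) ^ i - 2 ^ j) (2 ^ m + 1) := by
    have h := Int.isCoprime_iff_gcd_eq_one.mpr hgcd2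
    rw [show (2 : ℤ) ^ (i + 1) - 2 ^ (j + 1) = 2 * (2 ^ i - 2 ^ j) by ring] at h
    exact h.of_mul_left_right
  have hcard : (2 : ℤ) ^ (2 * m) = Fintype.card F := by rw [hF]; push_cast; rfl
  refine Finite.injective_iff_bijective.mp ?_
  convert injective_ite_eq_zero (trinomial_injOn hσ hcop (Int.isCoprime_iff_gcd_eq_one.mpr hgcd1))
    (fun x hx ↦ trinomial_ne_zero hσ hcop u hx) using 2 with x
  split_ifs with hx
  · rfl
  · simp only [hcard, FiniteField.pow_toNat_emod_card_sub_one hx, trinomial]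

open scoped Classical in
theorem stmt_10 (m : ℕ) (hm : 0 < m) (i j : ℕ) (hi : 0 < i) (hj : 0 < j) (hij : i ≠ j)
    (u : ℤ)
    (d₁ d₂ d₃ : ℤ)
    (hd₁ : d₁ = 2 ^ (i - 1) - 2 ^ (j - 1) + u * (2 ^ m + 1))
    (hd₂ : d₂ = 2 ^ (i - 1) + 2 ^ (j - 1) + (u - 2 ^ (j - 1)) * (2 ^ m + 1))
    (hd₃ : d₃ = -(2 ^ (i - 1) + 2 ^ (j - 1)) + (u + 2 ^ (i - 1)) * (2 ^ m + 1))
    (hgcd1 : Int.gcd d₁ (2 ^ (2 * m) - 1) = 1)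
    (hgcd2 : Int.gcd (2 ^ i - 2 ^ j) (2 ^ m + 1) = 1)
    (F : Type*) [Field F] [Fintype F] (hF : Fintype.card F = 2 ^ (2 * m)) :
    Function.Bijective (fun x : F =>
      if x = 0 then 0 else
        x ^ (d₁ % (2 ^ (2 * m) - 1)).toNat + x ^ (d₂ % (2 ^ (2 * m) - 1)).toNat +
          x ^ (d₃ % (2 ^ (2 * m) - 1)).toNat) :=
  stmt_10_general m i j hi hj u d₁ d₂ d₃ hd₁ hd₂ hd₃ hgcd1 hgcd2 F hF
end

section
/- Let m, j be positive integers, i = j + m − 1, U the subgroup of order 2^m + 1 of F_{2^{2m}}^×, d_1 = 2^{i−1} − 2^{j−1} + u(2^m+1) for some integer u, and g : U → U defined by g(x) = x^{d_1}(1 + x^{−2^{j−1}} + x^{2^{i−1}})^{2^m − 1} (assuming 1 + x^{−2^{j−1}} + x^{2^{i−1}} ≠ 0 on U). Let r_1, r_2 satisfy r_1·2^{m−1} ≡ 1 (mod 2^m+1) and r_2·2^{j−1} ≡ 1 (mod 2^m+1). Then g(x^{r_1 r_2}) = x for all x ∈ U; i.e., x ↦ x^{r_1 r_2} is the compositional inverse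 of g on U. -/
theorem stmt_14 (m j : ℕ) (hm : 0 < m) (hj : 0 < j) (i : ℕ) (hi : i = j + m - 1)
    (u : ℤ) (d₁ : ℤ) (hd₁ : d₁ = 2 ^ (i - 1) - 2 ^ (j - 1) + u * (2 ^ m + 1))
    (F : Type*) [Field F] [Fintype F] (hF : Fintype.card F = 2 ^ (2 * m))
    (hden : ∀ x : F, x ^ (2 ^ m + 1) = 1 →
      1 + x ^ (-(2 ^ (j - 1) : ℤ)) + x ^ ((2 ^ (i - 1) : ℤ)) ≠ 0)
    (g : F → F)
    (hg : ∀ x : F, g x =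
      x ^ d₁ * (1 + x ^ (-(2 ^ (j - 1) : ℤ)) + x ^ ((2 ^ (i - 1) : ℤ))) ^ (2 ^ m - 1))
    (r₁ r₂ : ℕ) (hr₁ : r₁ * 2 ^ (m - 1) ≡ 1 [MOD 2 ^ m + 1])
    (hr₂ : r₂ * 2 ^ (j - 1) ≡ 1 [MOD 2 ^ m + 1]) :
    ∀ x : F, x ^ (2 ^ m + 1) = 1 → g (x ^ (r₁ * r₂)) = x := by
  -- characteristic 2
  have h2 : (2 : F) = 0 := by
    have h0 : ((2 ^ (2 * m) : ℕ) : F) = 0 := by rw [← hF]; exact FiniteField.cast_card_eq_zero F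
    have h0' : ((2 : F)) ^ (2 * m) = 0 := by push_cast at h0; exact h0
    exact pow_eq_zero_iff (by omega) |>.mp h0'
  have hchar : ringChar F = 2 := by
    have hdvd : ringChar F ∣ 2 := (ringChar.spec F 2).mp (by exact_mod_cast h2)
    rcases (Nat.dvd_prime Nat.prime_two).mp hdvd with h | h
    · exfalso
      have := (ringChar.spec F 1).mpr (h ▸ dvd_refl _)
      simp at this
    · exact h
  haveI : CharP F 2 := hchar ▸ ringChar.charP F
  haveI : Fact (Nat.Prime 2) := ⟨Nat.prime_two⟩
  intro x hx
  set n : ℕ := 2 ^ m + 1 with hn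
  have hn3 : 3 ≤ n := by
    have : 2 ≤ 2 ^ m := Nat.one_lt_two_pow (by omega)
    omega
  have hx0 : x ≠ 0 := by
    intro h; rw [h, zero_pow (by omega)] at hx; exact one_ne_zero hx.symm
  set y : F := x ^ (r₁ * r₂) with hy
  have hy0 : y ≠ 0 := pow_ne_zero _ hx0
  have hyn : y ^ n = 1 := by
    rw [hy, ← pow_mul, mul_comm (r₁ * r₂) n, pow_mul, hx, one_pow]
  have hynz : y ^ (n : ℤ) = 1 := by rw [zpow_natCast, hyn]
  -- reduction of integer exponents mod n
  have hred : ∀ c d : ℤ, (n : ℤ) ∣ (c - d) → y ^ c = y ^ d := by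
    intro c d ⟨t, ht⟩
    have hc : c = d + n * t := by linarith
    rw [hc, zpow_add₀ hy0, zpow_mul, hynz, one_zpow, mul_one]
  -- y ^ (2^(i-1)) = x
  set a : ℕ := 2 ^ (j - 1) with ha
  set b : ℕ := 2 ^ (i - 1) with hb
  have hba : b = 2 ^ (m - 1) * a := by
    rw [hb, ha, ← pow_add]; congr 1; omega
  have hmod : (r₁ * r₂ * b) % n = 1 := by
    have h := Nat.ModEq.mul hr₁ hr₂
    have he : r₁ * 2 ^ (m - 1) * (r₂ * 2 ^ (j - 1)) = r₁ * r₂ * b := by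
      rw [hba, ha]; ring
    rw [he, one_mul] at h
    have h1 : 1 % n = 1 := Nat.mod_eq_of_lt (by omega)
    rw [Nat.ModEq, h1] at h
    exact h
  have hyx : y ^ (b : ℤ) = x := by
    rw [zpow_natCast, hy, ← pow_mul]
    conv_lhs => rw [← Nat.div_add_mod (r₁ * r₂ * b) n, hmod, pow_add, pow_mul, hx, one_pow,
      one_mul, pow_one]
  -- notation for the denominator
  set A : F := 1 + y ^ (-(2 ^ (j - 1) : ℤ)) + y ^ ((2 ^ (i - 1) : ℤ)) with hA
  have hA0 : A ≠ 0 := hden y hyn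
  have hza : ((2 : ℤ) ^ (j - 1)) = (a : ℤ) := by rw [ha]; push_cast; ring
  have hzb : ((2 : ℤ) ^ (i - 1)) = (b : ℤ) := by rw [hb]; push_cast; ring
  -- d₁ reduces to b - a
  have hd1red : y ^ d₁ = y ^ ((b : ℤ) - a) := by
    apply hred
    refine ⟨u, ?_⟩
    rw [hd₁, hza, hzb]
    push_cast [hn]
    ring
  -- Frobenius: A ^ (2^m) = 1 + y^a + y^(-b)
  have hfrob : A ^ (2 ^ m) = 1 + y ^ (a : ℤ) + y ^ (-(b : ℤ)) := by
    rw [hA, add_pow_char_pow, add_pow_char_pow, one_pow]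
    congr 1
    · congr 1
      rw [← zpow_natCast (y ^ (-(2 ^ (j - 1) : ℤ))) (2 ^ m), ← zpow_mul]
      apply hred
      rw [hza]
      refine ⟨-(a : ℤ), ?_⟩
      push_cast [hn]
      ring
    · rw [← zpow_natCast (y ^ ((2 ^ (i - 1) : ℤ))) (2 ^ m), ← zpow_mul]
      apply hred
      rw [hzb]
      refine ⟨(b : ℤ), ?_⟩
      push_cast [hn]
      ring
  -- key identity: y^(b-a) * A^(2^m) = y^b * A
  have hmulz : ∀ c d : ℤ, y ^ c * y ^ d = y ^ (c + d) := fun c d => (zpow_add₀ hy0 c d).symm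
  have hnb : 2 * b = 2 ^ m * a := by
    rw [hb, ha, ← pow_add]
    rw [show 2 * 2 ^ (i - 1) = 2 ^ (i - 1 + 1) by rw [pow_succ]; ring]
    congr 1; omega
  have h2b : y ^ ((b : ℤ) + b) = y ^ (-(a : ℤ)) := by
    apply hred
    refine ⟨(a : ℤ), ?_⟩
    have hnb' : 2 * (b : ℤ) = 2 ^ m * (a : ℤ) := by exact_mod_cast congrArg (Nat.cast : ℕ → ℤ) hnb
    push_cast [hn]
    linarith
  have hkey : y ^ ((b : ℤ) - a) * A ^ (2 ^ m) = y ^ (b : ℤ) * A := by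
    rw [hfrob, hA, hza, hzb]
    rw [mul_add, mul_add, mul_one, hmulz, hmulz, mul_add, mul_add, mul_one, hmulz, hmulz]
    have e1 : (b : ℤ) - a + a = (b : ℤ) := by ring
    have e2 : (b : ℤ) - a + -(b : ℤ) = -(a : ℤ) := by ring
    have e3 : (b : ℤ) + -a = (b : ℤ) - a := by ring
    rw [e1, e2, e3, h2b]
    ring
  -- conclude
  rw [hg]
  have hAe : A ^ (2 ^ m - 1) * A = A ^ (2 ^ m) := by
    rw [← pow_succ]; congr 1; omega
  apply mul_right_cancel₀ hA0
  calc y ^ d₁ * A ^ (2 ^ m - 1) * A = y ^ ((b : ℤ) - a) * A ^ (2 ^ m) := by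
        rw [mul_assoc, hAe, hd1red]
    _ = y ^ (b : ℤ) * A := hkey
    _ = x * A := by rw [hyx]
end

section
/- Let m, k, i be positive integers with gcd(2^i, 2^k − 1) = 1 and gcd(2^k − 1, 2^m + 1) = 1, and U the subgroup of order 2^m + 1 of F_{2^{2m}}^×. Then the composite map x ↦ ((x^{2^k+1} + x^{2^k} + 1)/(x^{2^k+1} + x + 1))^{2^i} is a bijection of U. -/
/-!
Write the map as `(N/D)^(2^i)` and put `q = 2 ^ k`, `Q = 2 ^ m`. On `U` we have `x^Q = x⁻¹`, and
this conjugation swaps `N` and `D` up to the factor `x^(q+1)`, so `N/D` maps `U` into `U`.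

For injectivity let `ω` be a primitive cube root of unity (it lies in `F`, as `3 ∣ 4 ^ m - 1`)
and put `A = (x + ω)(y + ω²)`, `B = (y + ω)(x + ω²)`, so that `A / B` is the cross-ratio
`(x, y; ω, ω²)`; in characteristic 2, `A - B = x - y`. The factorisations
`N + ωD = ω²(x + ω)(x^q + ω²)` and `N + ω²D = ω(x^q + ω)(x + ω²)` say that
`x ↦ (x + ω)/(x + ω²)` conjugates `N/D` to a monomial map, so `N(x)D(y) = N(y)D(x)` gives
`A^q B = A B^q` for `k` even and `A^(q+1) = B^(q+1)` for `k` odd. For `x, y ∈ U`, conjugation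
gives `A^(Q+1) = B^(Q+1)` for `m` even and `A^Q B = A B^Q` for `m` odd. In every parity case
allowed by `gcd(2^k - 1, 2^m + 1) = 1` the two exponents are coprime, so `A = B`, i.e. `x = y`.
The outer power `2 ^ i` is an iterated Frobenius, and `U` is finite.
-/

theorem neg_one_ne_one_of_two_pow_eq_neg_one {R : Type*} [CommRing R] [Nontrivial R] {a : ℕ}
    (ha : a ≠ 0) (h : (2 : R) ^ a = -1) : (-1 : R) ≠ 1 := by
  intro h1
  have h2 : (2 : R) = 0 := by linear_combination -h1
  rw [h2, zero_pow ha] at h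
  exact one_ne_zero (neg_eq_zero.mp h.symm)

theorem ZMod.two_pow_eq_neg_one_of_dvd {p a : ℕ} (h : p ∣ 2 ^ a + 1) :
    (2 : ZMod p) ^ a = -1 := by
  have h0 := (ZMod.natCast_eq_zero_iff _ p).2 h
  push_cast at h0
  exact eq_neg_of_add_eq_zero_left h0

theorem ZMod.two_pow_eq_one_of_dvd {p a : ℕ} (h : p ∣ 2 ^ a - 1) : (2 : ZMod p) ^ a = 1 := by
  have h0 := (ZMod.natCast_eq_zero_iff _ p).2 h
  rw [Nat.cast_sub Nat.one_le_two_pow] at h0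
  push_cast at h0
  exact sub_eq_zero.mp h0

theorem Nat.coprime_two_pow_add_one_two_pow_sub_one {a b : ℕ} (ha : Odd a) (hb : Odd b) :
    Nat.Coprime (2 ^ a + 1) (2 ^ b - 1) := by
  refine Nat.coprime_of_dvd fun p hp hpa hpb => ?_
  have : Fact p.Prime := ⟨hp⟩
  have h2a := ZMod.two_pow_eq_neg_one_of_dvd hpa
  apply neg_one_ne_one_of_two_pow_eq_neg_one ha.pos.ne' h2a
  calc (-1 : ZMod p) = (2 ^ a) ^ b := by rw [h2a, hb.neg_one_pow]
    _ = (2 ^ b) ^ a := by rw [← pow_mul, ← pow_mul, mul_comm]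
    _ = 1 := by rw [ZMod.two_pow_eq_one_of_dvd hpb, one_pow]

theorem Nat.coprime_two_pow_add_one_two_pow_add_one {a b : ℕ} (ha : Odd a) (hb : Even b) :
    Nat.Coprime (2 ^ a + 1) (2 ^ b + 1) := by
  refine Nat.coprime_of_dvd fun p hp hpa hpb => ?_
  have : Fact p.Prime := ⟨hp⟩
  have h2a := ZMod.two_pow_eq_neg_one_of_dvd hpa
  apply neg_one_ne_one_of_two_pow_eq_neg_one ha.pos.ne' h2a
  calc (-1 : ZMod p) = (2 ^ b) ^ a := by rw [ZMod.two_pow_eq_neg_one_of_dvd hpb, ha.neg_one_pow]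
    _ = (2 ^ a) ^ b := by rw [← pow_mul, ← pow_mul, mul_comm]
    _ = 1 := by rw [h2a, hb.neg_one_pow]

theorem Nat.three_dvd_two_pow_sub_one {k : ℕ} (hk : Even k) : 3 ∣ 2 ^ k - 1 := by
  obtain ⟨j, rfl⟩ := hk
  simpa [← two_mul, pow_mul] using Nat.sub_dvd_pow_sub_pow 4 1 j

theorem Nat.even_of_coprime_two_pow_sub_one_two_pow_add_one {k m : ℕ} (hk : Even k)
    (h : Nat.Coprime (2 ^ k - 1) (2 ^ m + 1)) : Even m := by
  by_contra hm
  have h3m : 3 ∣ 2 ^ m + 1 := by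
    simpa using (Nat.not_even_iff_odd.mp hm).nat_add_dvd_pow_add_pow 2 1
  have h3 := Nat.dvd_gcd (Nat.three_dvd_two_pow_sub_one hk) h3m
  rw [h.gcd_eq_one] at h3
  norm_num at h3

theorem eq_of_pow_eq_pow_of_coprime_s16 {M : Type*} [CommGroupWithZero M] {A B : M} {a b : ℕ}
    (hab : a.Coprime b) (hB : B ≠ 0) (ha : A ^ a = B ^ a) (hb : A ^ b = B ^ b) : A = B := by
  rw [← div_eq_one_iff_eq hB, ← pow_eq_one_iff_of_coprime hab, div_pow, div_pow, ha, hb,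
    div_self (pow_ne_zero _ hB), div_self (pow_ne_zero _ hB)]
  exact ⟨rfl, rfl⟩

theorem pow_sub_one_eq_of_pow_mul_eq {R : Type*} [CommRing R] [IsDomain R] {A B : R} {n : ℕ}
    (hn : n ≠ 0) (hA : A ≠ 0) (hB : B ≠ 0) (h : A ^ n * B = A * B ^ n) :
    A ^ (n - 1) = B ^ (n - 1) := by
  obtain ⟨n, rfl⟩ := Nat.exists_eq_add_one_of_ne_zero hn
  refine mul_right_cancel₀ (mul_ne_zero hA hB) ?_
  rw [Nat.add_sub_cancel]
  linear_combination h

theorem exists_sq_add_self_add_one_eq_zero {F : Type*} [Field F] [Fintype F]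
    (h : 3 ∣ Fintype.card F - 1) : ∃ ω : F, ω ^ 2 + ω + 1 = 0 := by
  classical
  obtain ⟨ζ, hζ⟩ := exists_prime_orderOf_dvd_card (G := Fˣ) 3 (by rwa [Fintype.card_units])
  have hprim : IsPrimitiveRoot (ζ : F) 3 := by
    rw [← hζ, ← orderOf_units]
    exact IsPrimitiveRoot.orderOf _
  refine ⟨ζ, ?_⟩
  have := hprim.geom_sum_eq_zero (by norm_num)
  simp only [Finset.sum_range_succ, Finset.sum_range_zero, pow_zero, pow_one, zero_add] at this
  linear_combination this

section CommRing

variable {R : Type*} [CommRing R]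

def numer (k : ℕ) (x : R) : R := x ^ (2 ^ k + 1) + x ^ 2 ^ k + 1

def denom (k : ℕ) (x : R) : R := x ^ (2 ^ k + 1) + x + 1

def crossNum (ω x y : R) : R := (x + ω) * (y + ω ^ 2)

theorem pow_two_pow_of_even {ω : R} (hω : ω ^ 2 + ω + 1 = 0) {n : ℕ} (hn : Even n) :
    ω ^ 2 ^ n = ω := by
  obtain ⟨c, hc⟩ := Nat.three_dvd_two_pow_sub_one hn
  rw [show 2 ^ n = 3 * c + 1 by have := @Nat.one_le_two_pow n; omega, pow_succ, pow_mul,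
    show ω ^ 3 = 1 by linear_combination (ω - 1) * hω, one_pow, one_mul]

theorem pow_two_pow_of_odd {ω : R} (hω : ω ^ 2 + ω + 1 = 0) {n : ℕ} (hn : Odd n) :
    ω ^ 2 ^ n = ω ^ 2 := by
  obtain ⟨c, hc⟩ : 3 ∣ 2 ^ n + 1 := by simpa using hn.nat_add_dvd_pow_add_pow 2 1
  have h3 : ω ^ 3 = 1 := by linear_combination (ω - 1) * hω
  calc ω ^ 2 ^ n = ω ^ 2 ^ n * ω ^ 3 := by rw [h3, mul_one]
    _ = ω ^ (2 ^ n + 1) * ω ^ 2 := by ring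
    _ = ω ^ 2 := by rw [hc, pow_mul, h3, one_pow, one_mul]

variable [CharP R 2] {ω : R} (hω : ω ^ 2 + ω + 1 = 0)
include hω

theorem crossNum_sub_crossNum (x y : R) : crossNum ω x y - crossNum ω y x = x - y := by
  simp only [crossNum]
  grind

theorem crossNum_pow_two_pow_of_even {n : ℕ} (hn : Even n) (x y : R) :
    crossNum ω x y ^ 2 ^ n = crossNum ω (x ^ 2 ^ n) (y ^ 2 ^ n) := by
  rw [crossNum, crossNum, mul_pow, add_pow_char_pow, add_pow_char_pow, pow_right_comm ω 2,
    pow_two_pow_of_even hω hn]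

theorem crossNum_pow_two_pow_of_odd {n : ℕ} (hn : Odd n) (x y : R) :
    crossNum ω x y ^ 2 ^ n = crossNum ω (y ^ 2 ^ n) (x ^ 2 ^ n) := by
  rw [crossNum, crossNum, mul_pow, add_pow_char_pow, add_pow_char_pow, pow_right_comm ω 2,
    pow_two_pow_of_odd hω hn]
  grind

theorem numer_add_mul_denom (k : ℕ) (x : R) :
    numer k x + ω * denom k x = ω ^ 2 * crossNum ω x (x ^ 2 ^ k) ∧
      numer k x + ω ^ 2 * denom k x = ω * crossNum ω (x ^ 2 ^ k) x := by
  simp only [numer, denom, crossNum, pow_succ]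
  constructor <;> grind

theorem crossNum_mul_crossNum_eq {k : ℕ} {x y : R}
    (h : numer k x * denom k y = numer k y * denom k x) :
    crossNum ω x y * crossNum ω (y ^ 2 ^ k) (x ^ 2 ^ k) =
      crossNum ω y x * crossNum ω (x ^ 2 ^ k) (y ^ 2 ^ k) := by
  obtain ⟨hx, hx'⟩ := numer_add_mul_denom hω k x
  obtain ⟨hy, hy'⟩ := numer_add_mul_denom hω k y
  have h3 : ω ^ 3 = 1 := by linear_combination (ω - 1) * hω
  calc crossNum ω x y * crossNum ω (y ^ 2 ^ k) (x ^ 2 ^ k)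
      = ω ^ 3 * (crossNum ω x (x ^ 2 ^ k) * crossNum ω (y ^ 2 ^ k) y) := by
        rw [h3]; simp only [crossNum]; ring
    _ = (numer k x + ω * denom k x) * (numer k y + ω ^ 2 * denom k y) := by rw [hx, hy']; ring
    _ = (numer k y + ω * denom k y) * (numer k x + ω ^ 2 * denom k x) := by
        linear_combination (ω ^ 2 - ω) * h
    _ = ω ^ 3 * (crossNum ω y (y ^ 2 ^ k) * crossNum ω (x ^ 2 ^ k) x) := by rw [hy, hx']; ring
    _ = crossNum ω y x * crossNum ω (x ^ 2 ^ k) (y ^ 2 ^ k) := by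
        rw [h3]; simp only [crossNum]; ring

theorem crossNum_pow_two_pow_mul_eq_of_even {k : ℕ} (hk : Even k) {x y : R}
    (h : numer k x * denom k y = numer k y * denom k x) :
    crossNum ω x y ^ 2 ^ k * crossNum ω y x = crossNum ω x y * crossNum ω y x ^ 2 ^ k := by
  have hc := crossNum_mul_crossNum_eq hω h
  rw [← crossNum_pow_two_pow_of_even hω hk, ← crossNum_pow_two_pow_of_even hω hk] at hc
  linear_combination -hc

theorem crossNum_pow_succ_eq_of_odd {k : ℕ} (hk : Odd k) {x y : R}
    (h : numer k x * denom k y = numer k y * denom k x) :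
    crossNum ω x y ^ (2 ^ k + 1) = crossNum ω y x ^ (2 ^ k + 1) := by
  have hc := crossNum_mul_crossNum_eq hω h
  rw [← crossNum_pow_two_pow_of_odd hω hk, ← crossNum_pow_two_pow_of_odd hω hk] at hc
  rw [pow_succ', pow_succ', hc]

omit [CharP R 2] in
theorem crossNum_mul_mul_eq {X Y x y : R} (hx : X * x = 1) (hy : Y * y = 1) :
    crossNum ω X Y * (x * y) = crossNum ω y x := by
  simp only [crossNum]
  grind

theorem crossNum_pow_two_pow_mul_of_even {m : ℕ} (hm : Even m) {x y : R}
    (hx : x ^ (2 ^ m + 1) = 1) (hy : y ^ (2 ^ m + 1) = 1) :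
    crossNum ω x y ^ 2 ^ m * (x * y) = crossNum ω y x := by
  rw [crossNum_pow_two_pow_of_even hω hm]
  exact crossNum_mul_mul_eq hω (by rwa [← pow_succ]) (by rwa [← pow_succ])

theorem crossNum_pow_two_pow_mul_of_odd {m : ℕ} (hm : Odd m) {x y : R}
    (hx : x ^ (2 ^ m + 1) = 1) (hy : y ^ (2 ^ m + 1) = 1) :
    crossNum ω x y ^ 2 ^ m * (x * y) = crossNum ω x y := by
  rw [crossNum_pow_two_pow_of_odd hω hm, mul_comm x y]
  exact crossNum_mul_mul_eq hω (by rwa [← pow_succ]) (by rwa [← pow_succ])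

omit hω

theorem denom_pow_two_pow_mul {k m : ℕ} {x : R} (hx : x ^ (2 ^ m + 1) = 1) :
    denom k x ^ 2 ^ m * x ^ (2 ^ k + 1) = numer k x := by
  rw [pow_succ] at hx
  rw [denom, numer, add_pow_char_pow, add_pow_char_pow, one_pow, pow_right_comm x (2 ^ k + 1),
    add_mul, add_mul, ← mul_pow, hx, one_pow]
  linear_combination x ^ 2 ^ k * hx

theorem numer_pow_two_pow_mul {k m : ℕ} {x : R} (hx : x ^ (2 ^ m + 1) = 1) :
    numer k x ^ 2 ^ m * x ^ (2 ^ k + 1) = denom k x := by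
  rw [pow_succ] at hx
  rw [denom, numer, add_pow_char_pow, add_pow_char_pow, one_pow, pow_right_comm x (2 ^ k + 1),
    add_mul, add_mul, ← mul_pow, hx, one_pow, pow_right_comm x (2 ^ k), pow_succ x (2 ^ k),
    ← mul_assoc, ← mul_pow, hx, one_pow, one_mul]
  ring

end CommRing

section Field

variable {F : Type*} [Field F] [CharP F 2] {k m : ℕ} (hgcd : Nat.Coprime (2 ^ k - 1) (2 ^ m + 1))
include hgcd

theorem denom_ne_zero {x : F} (hx : x ^ (2 ^ m + 1) = 1) : denom k x ≠ 0 := by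
  intro hD
  have hx0 : x ≠ 0 := right_ne_zero_of_mul_eq_one (by rwa [← pow_succ])
  have hN : numer k x = 0 := by
    rw [← denom_pow_two_pow_mul hx, hD, zero_pow (by positivity), zero_mul]
  have hq : x ^ (2 ^ k - 1) = 1 := by
    refine mul_right_cancel₀ hx0 ?_
    rw [← pow_succ, Nat.sub_add_cancel Nat.one_le_two_pow, one_mul]
    simp only [numer, denom] at hN hD
    linear_combination hN - hD
  obtain rfl : x = 1 := (pow_eq_one_iff_of_coprime hgcd).mp ⟨hq, hx⟩
  simp only [denom, one_pow] at hD
  grind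

theorem numer_ne_zero {x : F} (hx : x ^ (2 ^ m + 1) = 1) : numer k x ≠ 0 := by
  intro hN
  apply denom_ne_zero hgcd hx
  rw [← numer_pow_two_pow_mul hx, hN, zero_pow (by positivity), zero_mul]

theorem numer_div_denom_pow_succ {x : F} (hx : x ^ (2 ^ m + 1) = 1) :
    (numer k x / denom k x) ^ (2 ^ m + 1) = 1 := by
  have hx0 : x ^ (2 ^ k + 1) ≠ 0 :=
    pow_ne_zero _ (right_ne_zero_of_mul_eq_one (by rwa [← pow_succ]))
  rw [pow_succ, div_pow, ← mul_div_mul_right _ _ hx0, numer_pow_two_pow_mul hx,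
    denom_pow_two_pow_mul hx, div_mul_div_cancel₀ (numer_ne_zero hgcd hx),
    div_self (denom_ne_zero hgcd hx)]

variable {ω : F} (hω : ω ^ 2 + ω + 1 = 0) {x y : F} (hx : x ^ (2 ^ m + 1) = 1)
  (hy : y ^ (2 ^ m + 1) = 1) (h : numer k x * denom k y = numer k y * denom k x)
include hω hx hy h

theorem crossNum_eq_of_even (hm : Even m) : crossNum ω x y = crossNum ω y x := by
  set A := crossNum ω x y
  set B := crossNum ω y x
  have hAB : A ^ 2 ^ m * (x * y) = B := crossNum_pow_two_pow_mul_of_even hω hm hx hy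
  have hBA : B ^ 2 ^ m * (x * y) = A := by
    rw [mul_comm x y]; exact crossNum_pow_two_pow_mul_of_even hω hm hy hx
  rcases eq_or_ne B 0 with hB | hB
  · rw [← hBA, hB, zero_pow (by positivity), zero_mul]
  have hA : A ≠ 0 := fun hA => hB (by rw [← hAB, hA, zero_pow (by positivity), zero_mul])
  have hxy : x * y ≠ 0 := right_ne_zero_of_mul (hBA ▸ hA)
  have hQ : A ^ (2 ^ m + 1) = B ^ (2 ^ m + 1) :=
    mul_right_cancel₀ hxy (by linear_combination A * hAB - B * hBA)
  rcases Nat.even_or_odd k with hk | hk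
  · refine eq_of_pow_eq_pow_of_coprime_s16 hgcd hB ?_ hQ
    exact pow_sub_one_eq_of_pow_mul_eq (by positivity) hA hB
      (crossNum_pow_two_pow_mul_eq_of_even hω hk h)
  · exact eq_of_pow_eq_pow_of_coprime_s16 (Nat.coprime_two_pow_add_one_two_pow_add_one hk hm) hB
      (crossNum_pow_succ_eq_of_odd hω hk h) hQ

theorem crossNum_eq_of_odd (hm : Odd m) : crossNum ω x y = crossNum ω y x := by
  set A := crossNum ω x y
  set B := crossNum ω y x
  have hk : Odd k := Nat.not_even_iff_odd.mp fun hk =>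
    Nat.not_even_iff_odd.mpr hm (Nat.even_of_coprime_two_pow_sub_one_two_pow_add_one hk hgcd)
  have hq : A ^ (2 ^ k + 1) = B ^ (2 ^ k + 1) := crossNum_pow_succ_eq_of_odd hω hk h
  rcases eq_or_ne B 0 with hB | hB
  · rw [hB, zero_pow (by positivity), pow_eq_zero_iff (by positivity)] at hq
    rw [hq, hB]
  have hA : A ≠ 0 := fun hA => hB (by
    rwa [hA, zero_pow (by positivity), eq_comm, pow_eq_zero_iff (by positivity)] at hq)
  have hAx : A ^ 2 ^ m * (x * y) = A := crossNum_pow_two_pow_mul_of_odd hω hm hx hy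
  have hBy : B ^ 2 ^ m * (x * y) = B := by
    rw [mul_comm x y]; exact crossNum_pow_two_pow_mul_of_odd hω hm hy hx
  have hxy : x * y ≠ 0 := right_ne_zero_of_mul (hAx ▸ hA)
  have hQ : A ^ 2 ^ m * B = A * B ^ 2 ^ m :=
    mul_right_cancel₀ hxy (by linear_combination B * hAx - A * hBy)
  exact eq_of_pow_eq_pow_of_coprime_s16 (Nat.coprime_two_pow_add_one_two_pow_sub_one hk hm) hB hq
    (pow_sub_one_eq_of_pow_mul_eq (by positivity) hA hB hQ)

theorem eq_of_numer_mul_denom_eq : x = y := by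
  rw [← sub_eq_zero, ← crossNum_sub_crossNum hω, sub_eq_zero]
  rcases Nat.even_or_odd m with hm | hm
  · exact crossNum_eq_of_even hgcd hω hx hy h hm
  · exact crossNum_eq_of_odd hgcd hω hx hy h hm

end Field

theorem stmt_16_general (m k i : ℕ)
    (hgcd2 : Nat.gcd (2 ^ k - 1) (2 ^ m + 1) = 1)
    (F : Type*) [Field F] [Fintype F] (hF : Fintype.card F = 2 ^ (2 * m)) :
    Set.BijOn
      (fun x : F => ((x ^ (2 ^ k + 1) + x ^ 2 ^ k + 1) / (x ^ (2 ^ k + 1) + x + 1)) ^ 2 ^ i)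
      {x : F | x ^ (2 ^ m + 1) = 1} {x : F | x ^ (2 ^ m + 1) = 1} := by
  have : CharP F 2 := charP_of_card_eq_prime_pow hF
  obtain ⟨ω, hω⟩ := exists_sq_add_self_add_one_eq_zero (F := F)
    (hF ▸ Nat.three_dvd_two_pow_sub_one (even_two_mul m))
  refine ((Set.toFinite _).injOn_iff_bijOn_of_mapsTo fun x (hx : x ^ (2 ^ m + 1) = 1) => ?_).mp
    fun x hx y hy hxy => ?_
  · change ((numer k x / denom k x) ^ 2 ^ i) ^ (2 ^ m + 1) = 1
    rw [pow_right_comm, numer_div_denom_pow_succ hgcd2 hx, one_pow]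
  · have hR : numer k x / denom k x = numer k y / denom k y := iterateFrobenius_inj F 2 i hxy
    rw [div_eq_div_iff (denom_ne_zero hgcd2 hx) (denom_ne_zero hgcd2 hy)] at hR
    exact eq_of_numer_mul_denom_eq hgcd2 hω hx hy hR

theorem stmt_16 (m k i : ℕ) (hm : 0 < m) (hk : 0 < k) (hi : 0 < i)
    (hgcd1 : Nat.gcd (2 ^ i) (2 ^ k - 1) = 1)
    (hgcd2 : Nat.gcd (2 ^ k - 1) (2 ^ m + 1) = 1)
    (F : Type*) [Field F] [Fintype F] (hF : Fintype.card F = 2 ^ (2 * m)) :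
    Set.BijOn
      (fun x : F => ((x ^ (2 ^ k + 1) + x ^ 2 ^ k + 1) / (x ^ (2 ^ k + 1) + x + 1)) ^ 2 ^ i)
      {x : F | x ^ (2 ^ m + 1) = 1} {x : F | x ^ (2 ^ m + 1) = 1} :=
  stmt_16_general m k i hgcd2 F hF
end

section
/- Let m, k be positive integers with gcd(2^k − 1, 2^m + 1) = 1, U the subgroup of order 2^m + 1 of F_{2^{2m}}^×, K = 2^k, and I a power of 2. Then for every β ∈ U, the equation (1 + β)x^{I·K + I} + x^{I·K} + β x^I + 1 + β = 0 has exactly one solution x ∈ U. -/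
lemma aux17_pow2 {F : Type*} [CommRing F] (h2 : (2:F) = 0) (n : ℕ) (a b : F) :
    (a + b) ^ (2^n) = a ^ (2^n) + b ^ (2^n) := by
  induction n with
  | zero => simp
  | succ n ih =>
    have h : (2:ℕ)^(n+1) = 2^n * 2 := by ring
    rw [h, pow_mul, pow_mul, pow_mul, ih]
    linear_combination (a^(2^n) * b^(2^n)) * h2

lemma aux17_key {F : Type*} [CommRing F] (h2 : (2:F) = 0) (x z X Z : F) :
    (x*X+X+1)*((Z*X+1)*(z*x+1)+(z*x+1)*(X+Z)+(X+Z)*(x+z))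
  + (x*X+x+1)*((Z*X+1)*(z*x+1)+(Z*X+1)*(x+z)+(X+Z)*(x+z))
  = (X+x)^2 + z*(x^2+x+1)*(X+1)^2 + Z*(x+1)^2*(X^2+X+1) := by
  linear_combination ((1) + X + X*Z + X*Z*x + (3)*X*Z*x*z + X*Z*x^2 + X*Z*x^2*z + X*Z*z + X*x + X*x*z + X*x^2 + X^2*Z*x*z + X^2*Z*x^2*z + X^2*x + X^2*x*z + X^2*x^2 + Z*x*z + Z*z + x + x*z) * h2


lemma aux17_parity (m k : ℕ) (hm : 0 < m) (hk : 0 < k)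
    (hgcd : Nat.gcd (2 ^ k - 1) (2 ^ m + 1) = 1) :
    ∃ a b : ℕ, Odd b ∧ k * a = m * b := by
  set d := Nat.gcd k m with hd
  have hdk : d ∣ k := Nat.gcd_dvd_left k m
  have hdm : d ∣ m := Nat.gcd_dvd_right k m
  have hd0 : 0 < d := Nat.gcd_pos_of_pos_left m hk
  refine ⟨m / d, k / d, ?_, ?_⟩
  · by_contra hodd
    have heven : 2 ∣ k / d := by
      rcases Nat.even_or_odd (k/d) with h | h
      · exact h.two_dvd
      · exact absurd h hodd
    obtain ⟨c, hc⟩ := heven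
    have hk_eq : k = (2*d)*c := by
      have h1 : d * (k / d) = k := Nat.mul_div_cancel' hdk
      rw [hc] at h1; rw [← h1]; ring
    have hco : Nat.Coprime (k/d) (m/d) := Nat.coprime_div_gcd_div_gcd hd0
    have hmodd : Odd (m / d) := by
      rcases Nat.even_or_odd (m/d) with h | h
      · exfalso
        have h2 : 2 ∣ Nat.gcd (k/d) (m/d) := Nat.dvd_gcd ⟨c, hc⟩ h.two_dvd
        rw [hco] at h2; omega
      · exact h
    have h1 : (2^d + 1) ∣ 2^k - 1 := by
      have ha : (2^(2*d) - 1) ∣ 2^k - 1 := by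
        have := Nat.sub_dvd_pow_sub_pow (2^(2*d)) 1 c
        simpa [← pow_mul, hk_eq] using this
      refine dvd_trans ?_ ha
      have h2d : (2:ℕ)^(2*d) = (2^d)^2 := by rw [pow_mul', sq]
      rw [h2d]
      have := sq_tsub_sq (2^d) 1
      rw [one_pow] at this
      rw [this]
      exact Dvd.intro _ rfl
    have h2 : (2^d + 1) ∣ 2^m + 1 := by
      have hmd : m = d * (m/d) := (Nat.mul_div_cancel' hdm).symm
      have := Odd.nat_add_dvd_pow_add_pow (2^d) 1 hmodd
      simpa [← pow_mul, ← hmd] using this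
    have := Nat.dvd_gcd h1 h2
    rw [hgcd] at this
    have h1d : 1 ≤ 2^d := Nat.one_le_two_pow
    have := Nat.le_of_dvd one_pos this
    omega
  · obtain ⟨a, ha⟩ := hdk
    obtain ⟨b, hb⟩ := hdm
    rw [ha, hb, Nat.mul_div_cancel_left _ hd0, Nat.mul_div_cancel_left _ hd0]
    ring

lemma aux17_iter {F : Type*} [Field F] (h2 : (2:F) = 0) (ρ : F) (k m a b : ℕ)
    (hk : ρ ^ (2^k) = ρ) (hm : ρ ^ (2^m) = ρ + 1) (hb : Odd b) (hab : k * a = m * b) :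
    False := by
  have hA : ∀ n : ℕ, ρ ^ (2^(k*n)) = ρ := by
    intro n
    induction n with
    | zero => simp
    | succ n ih =>
      have h : 2^(k*(n+1)) = 2^(k*n) * 2^k := by rw [← pow_add]; ring_nf
      rw [h, pow_mul, ih, hk]
  have hm2 : ρ ^ (2^(2*m)) = ρ := by
    have h : 2^(2*m) = 2^m * 2^m := by rw [two_mul, pow_add]
    rw [h, pow_mul, hm, aux17_pow2 h2, hm, one_pow]
    linear_combination h2
  have hB : ∀ n : ℕ, ρ ^ (2^(2*m*n)) = ρ := by
    intro n
    induction n with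
    | zero => simp
    | succ n ih =>
      have h : 2^(2*m*(n+1)) = 2^(2*m*n) * 2^(2*m) := by rw [← pow_add]; ring_nf
      rw [h, pow_mul, ih, hm2]
  obtain ⟨c, hcv⟩ := hb
  have h1 : ρ ^ (2^(m*b)) = ρ + 1 := by
    have h : 2^(m*b) = 2^(2*m*c) * 2^m := by rw [← pow_add, hcv]; ring_nf
    rw [h, pow_mul, hB, hm]
  rw [← hab, hA] at h1
  have : (0:F) = 1 := by linear_combination h1
  exact one_ne_zero this.symm

lemma aux17_one {F : Type*} [Field F] {m k : ℕ}
    (hgcd : Nat.gcd (2 ^ k - 1) (2 ^ m + 1) = 1)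
    {w : F} (hU : w ^ (2^m + 1) = 1) (hw : w ^ (2^k) = w) : w = 1 := by
  have hw0 : w ≠ 0 := by
    intro h; rw [h, zero_pow (by positivity)] at hU; exact zero_ne_one hU
  have h1 : w ^ (2^k - 1) = 1 := by
    have hpow : w ^ (2^k - 1) * w = 1 * w := by
      rw [one_mul, ← pow_succ, Nat.sub_add_cancel Nat.one_le_two_pow, hw]
    exact mul_right_cancel₀ hw0 hpow
  have o3 : orderOf w ∣ 1 := by
    rw [← hgcd]
    exact Nat.dvd_gcd (orderOf_dvd_of_pow_eq_one h1) (orderOf_dvd_of_pow_eq_one hU)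
  exact orderOf_eq_one_iff.mp (Nat.dvd_one.mp o3)

lemma aux17_inj {F : Type*} [Field F] (m k : ℕ) (hm : 0 < m) (hk : 0 < k)
    (hgcd : Nat.gcd (2 ^ k - 1) (2 ^ m + 1) = 1) (h2 : (2:F) = 0)
    (x y : F) (hxU : x ^ (2^m + 1) = 1) (hyU : y ^ (2^m + 1) = 1)
    (heq : (x^(2^k) * x + x^(2^k) + 1) * (y^(2^k) * y + y + 1)
        = (y^(2^k) * y + y^(2^k) + 1) * (x^(2^k) * x + x + 1)) : x = y := by
  have hx0 : x ≠ 0 := fun h => by rw [h, zero_pow (by positivity)] at hxU; exact zero_ne_one hxU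
  have hy0 : y ≠ 0 := fun h => by rw [h, zero_pow (by positivity)] at hyU; exact zero_ne_one hyU
  have hqx : x ^ (2^m) * x = 1 := by rw [← pow_succ]; exact hxU
  have hqy : y ^ (2^m) * y = 1 := by rw [← pow_succ]; exact hyU
  by_cases hx1 : x = 1
  · subst hx1
    have h3 : y ^ (2^k) = y := by
      linear_combination (-1 : F) * heq + (-(y^(2^k)) + y)*h2
    exact (aux17_one hgcd hyU h3).symm
  by_cases hy1 : y = 1
  · subst hy1
    have h3 : x ^ (2^k) = x := by
      linear_combination heq + (-(x^(2^k)) + x)*h2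
    exact aux17_one hgcd hxU h3
  by_contra hne
  have hs0 : x + y ≠ 0 := fun h => hne (by linear_combination h + (-y)*h2)
  have hx1' : x + 1 ≠ 0 := fun h => hx1 (by linear_combination h - h2)
  set z : F := (x*y + 1) / (x + y) with hzdef
  have hz : z * (x + y) = x*y + 1 := div_mul_cancel₀ _ hs0
  have hzq : z ^ (2^m) = z := by
    have h1 : z^(2^m) * (x^(2^m) + y^(2^m)) = x^(2^m) * y^(2^m) + 1 := by
      have h1' : (z*(x+y))^(2^m) = (x*y+1)^(2^m) := by rw [hz]
      rw [mul_pow, aux17_pow2 h2 m x y, aux17_pow2 h2 m (x*y) 1, mul_pow, one_pow] at h1'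
      exact h1'
    have h8 : z^(2^m) * ((x+y)*(x*y)) = z * ((x+y)*(x*y)) := by
      linear_combination (x*y)*(x*y)*h1 + (z^(2^m)*x*y*y + x*y*(y^(2^m))*y)*hqx
        + (z^(2^m)*x*y*x + x*y)*hqy + (-(x*y))*hz
        + (-(x^(2^m))*x^2*y^2*(z^(2^m)) - (y^(2^m))*x^2*y^2*(z^(2^m)) + x*y^2*(z^(2^m)) + x^2*y*(z^(2^m)))*h2
    exact mul_right_cancel₀ (mul_ne_zero hs0 (mul_ne_zero hx0 hy0)) h8
  have hw : y * (x + z) = z * x + 1 := by linear_combination hz + (x*y - z*x)*h2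
  have e3 : (x+z)^(2^k) = x^(2^k) + z^(2^k) := aux17_pow2 h2 k x z
  have e2' : y^(2^k) * (x^(2^k) + z^(2^k)) = z^(2^k) * x^(2^k) + 1 := by
    rw [← e3, ← mul_pow, hw, aux17_pow2 h2 k (z*x) 1, mul_pow, one_pow]
  have hDy : (y^(2^k)*y + y + 1) * ((x^(2^k)+z^(2^k))*(x+z))
      = (z^(2^k)*x^(2^k)+1)*(z*x+1) + (z*x+1)*(x^(2^k)+z^(2^k)) + (x^(2^k)+z^(2^k))*(x+z) := by
    linear_combination (y*(x+z))*e2' + ((z^(2^k)*x^(2^k)+1)+(x^(2^k)+z^(2^k)))*hw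
  have hNy : (y^(2^k)*y + y^(2^k) + 1) * ((x^(2^k)+z^(2^k))*(x+z))
      = (z^(2^k)*x^(2^k)+1)*(z*x+1) + (z^(2^k)*x^(2^k)+1)*(x+z) + (x^(2^k)+z^(2^k))*(x+z) := by
    linear_combination ((y+1)*(x+z))*e2' + (z^(2^k)*x^(2^k)+1)*hw
  have hkey := aux17_key h2 x z (x^(2^k)) (z^(2^k))
  have E1 : (x^(2^k)+x)^2 + z*(x^2+x+1)*(x^(2^k)+1)^2 + z^(2^k)*(x+1)^2*((x^(2^k))^2+x^(2^k)+1) = 0 := by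
    linear_combination (x^(2^k)*x+x^(2^k)+1)*hDy + (x^(2^k)*x+x+1)*hNy
      + (-((x^(2^k)+z^(2^k))*(x+z)))*heq + hkey
      + (-x^(2^k)*y^(2^k)*z^(2^k)*x*y*z - x^(2^k)*y^(2^k)*z^(2^k)*x*z - x^(2^k)*y^(2^k)*z^(2^k)*x^2 - x^(2^k)*y^(2^k)*z^(2^k)*x^2*y - x^(2^k)*y^(2^k)*x - x^(2^k)*y^(2^k)*x*y - x^(2^k)*y^(2^k)*x*y*z - x^(2^k)*y^(2^k)*x*z - x^(2^k)*y^(2^k)*x^2 - x^(2^k)*y^(2^k)*x^2*y - x^(2^k)*y^(2^k)*y*z - x^(2^k)*y^(2^k)*z + x^(2^k)*z^(2^k) + 2*x^(2^k)*z^(2^k)*x - x^(2^k)*z^(2^k)*x*z + x^(2^k)*x + x^(2^k)*x*z - x^(2^k)*x^2 + 2*x^(2^k)*x^2*z + x^(2^k)*z + (x^(2^k))^2 - (x^(2^k))^2*y^(2^k)*x*y*z - (x^(2^k))^2*y^(2^k)*x*z - (x^(2^k))^2*y^(2^k)*x^2 - (x^(2^k))^2*y^(2^k)*x^2*y + (x^(2^k))^2*z^(2^k)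 + 2*(x^(2^k))^2*z^(2^k)*x + (x^(2^k))^2*z^(2^k)*x^2 - (x^(2^k))^2*x^2 + (x^(2^k))^2*x^2*z + (x^(2^k))^2*z - y^(2^k)*z^(2^k)*x - y^(2^k)*z^(2^k)*x*y - y^(2^k)*z^(2^k)*x*y*z - y^(2^k)*z^(2^k)*x*z - y^(2^k)*z^(2^k)*x^2 - y^(2^k)*z^(2^k)*x^2*y - y^(2^k)*z^(2^k)*y*z - y^(2^k)*z^(2^k)*z + z^(2^k) + z^(2^k)*x - z^(2^k)*x*z - z^(2^k)*z + x*z + x^2 + x^2*z + z)*h2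
  set ρ : F := (z*(x^2+x+1) + 1) / (x+1)^2 with hρdef
  have hρ : ρ * (x+1)^2 = z*(x^2+x+1) + 1 := div_mul_cancel₀ _ (pow_ne_zero 2 hx1')
  have hXx1 : (x+1)^(2^k) = x^(2^k) + 1 := by rw [aux17_pow2 h2 k x 1, one_pow]
  have hX1 : x^(2^k) + 1 ≠ (0:F) := by rw [← hXx1]; exact pow_ne_zero _ hx1'
  have h5 : (x^2+x+1)^(2^k) = (x^(2^k))^2 + x^(2^k) + 1 := by
    rw [aux17_pow2 h2 k (x^2+x) 1, aux17_pow2 h2 k (x^2) x, one_pow, pow_right_comm]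
  have h6 : ((x+1)^2)^(2^k) = (x^(2^k)+1)^2 := by rw [pow_right_comm, hXx1]
  have hρK : ρ^(2^k) * (x^(2^k)+1)^2 = z^(2^k)*((x^(2^k))^2+x^(2^k)+1) + 1 := by
    have hc : (ρ*(x+1)^2)^(2^k) = (z*(x^2+x+1)+1)^(2^k) := by rw [hρ]
    rw [mul_pow, h6, aux17_pow2 h2 k (z*(x^2+x+1)) 1, mul_pow, one_pow, h5] at hc
    exact hc
  have hρfix : ρ^(2^k) = ρ := by
    have h7 : ρ^(2^k) * ((x+1)^2*(x^(2^k)+1)^2) = ρ * ((x+1)^2*(x^(2^k)+1)^2) := by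
      linear_combination (x+1)^2*hρK + (-((x^(2^k)+1)^2))*hρ + E1
        + (-x^(2^k) - x^(2^k)*x - 2*x^(2^k)*x*z - 2*x^(2^k)*x^2*z - 2*x^(2^k)*z - (x^(2^k))^2 - (x^(2^k))^2*x*z - (x^(2^k))^2*x^2*z - (x^(2^k))^2*z + x - x*z - x^2*z - z)*h2
    exact mul_right_cancel₀ (mul_ne_zero (pow_ne_zero 2 hx1') (pow_ne_zero 2 hX1)) h7
  have hxq1 : (x+1)^(2^m) = x^(2^m) + 1 := by rw [aux17_pow2 h2 m x 1, one_pow]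
  have h5q : (x^2+x+1)^(2^m) = (x^(2^m))^2 + x^(2^m) + 1 := by
    rw [aux17_pow2 h2 m (x^2+x) 1, aux17_pow2 h2 m (x^2) x, one_pow, pow_right_comm]
  have hρq1 : ρ^(2^m) * (x^(2^m)+1)^2 = z*((x^(2^m))^2 + x^(2^m) + 1) + 1 := by
    have hc : (ρ*(x+1)^2)^(2^m) = (z*(x^2+x+1)+1)^(2^m) := by rw [hρ]
    rw [mul_pow, pow_right_comm (x+1) 2 (2^m), hxq1,
        aux17_pow2 h2 m (z*(x^2+x+1)) 1, mul_pow, one_pow, h5q, hzq] at hc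
    exact hc
  have step1 : ρ^(2^m) * ((x^(2^m)+1)^2 * x^2) = z*(x^2+x+1) + x^2 := by
    linear_combination x^2*hρq1 + (z*(x^(2^m)*x + 1 + x))*hqx
  have step2 : (x^(2^m)+1)^2 * x^2 = (x+1)^2 := by
    linear_combination (x^(2^m)*x + 2*x + 1)*hqx
  have hρq : ρ^(2^m) = ρ + 1 := by
    have h9 : ρ^(2^m) * (x+1)^2 = (ρ+1) * (x+1)^2 := by
      linear_combination step1 + (-(ρ^(2^m)))*step2 + (-1 : F)*hρ + (-1-x)*h2
    exact mul_right_cancel₀ (pow_ne_zero 2 hx1') h9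
  obtain ⟨a, b, hb, hab⟩ := aux17_parity m k hm hk hgcd
  exact aux17_iter h2 ρ k m a b hρfix hρq hb hab

set_option maxHeartbeats 1000000 in
theorem stmt_17 (m k i : ℕ) (hm : 0 < m) (hk : 0 < k)
    (hgcd : Nat.gcd (2 ^ k - 1) (2 ^ m + 1) = 1)
    (K I : ℕ) (hK : K = 2 ^ k) (hI : I = 2 ^ i)
    (F : Type*) [Field F] [Fintype F] (hF : Fintype.card F = 2 ^ (2 * m)) :
    ∀ β : F, β ^ (2 ^ m + 1) = 1 →
      ∃! x : F, x ^ (2 ^ m + 1) = 1 ∧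
        (1 + β) * x ^ (I * K + I) + x ^ (I * K) + β * x ^ I + 1 + β = 0 := by
  have h2 : (2:F) = 0 := by
    have hc : ((Fintype.card F : ℕ) : F) = 0 := FiniteField.cast_card_eq_zero F
    rw [hF] at hc
    push_cast at hc
    exact pow_eq_zero_iff (by positivity) |>.mp hc
  have hcard : ∀ w : F, w ^ (2^(2*m)) = w := fun w => by
    rw [← hF]; exact FiniteField.pow_card w
  intro β hβ
  -- the auxiliary element γ with γ^I = β
  have hβfix : ∀ j : ℕ, β ^ (2^(2*m*j)) = β := by
    intro j
    induction j with
    | zero => simp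
    | succ j ih =>
      have h : 2^(2*m*(j+1)) = 2^(2*m*j) * 2^(2*m) := by rw [← pow_add]; ring_nf
      rw [h, pow_mul, ih, hcard]
  set γ : F := β ^ (2^((2*m-1)*i)) with hγdef
  have hγI : γ ^ I = β := by
    rw [hI, hγdef, ← pow_mul, ← pow_add]
    have h : (2*m-1)*i + i = 2*m*i := by
      have h1 : 2*m - 1 + 1 = 2*m := by omega
      calc (2*m-1)*i + i = (2*m-1+1)*i := by ring
        _ = 2*m*i := by rw [h1]
    rw [h]
    exact hβfix i
  have hγI' : γ ^ (2^i) = β := by rw [← hI]; exact hγI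
  have hγU : γ ^ (2^m + 1) = 1 := by
    rw [hγdef, pow_right_comm, hβ, one_pow]
  -- equation equivalence
  have hEq : ∀ x : F, ((1 + β) * x ^ (I * K + I) + x ^ (I * K) + β * x ^ I + 1 + β = 0)
      ↔ ((x^(2^k)*x + x^(2^k) + 1) + γ*(x^(2^k)*x + x + 1) = 0) := by
    intro x
    have ha : ((x^(2^k)*x))^(2^i) = x^(I*K+I) := by
      rw [← pow_succ, ← pow_mul]
      congr 1
      rw [hK, hI]; ring
    have hb : ((x^(2^k)))^(2^i) = x^(I*K) := by
      rw [← pow_mul]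
      congr 1
      rw [hK, hI]; ring
    have hc : x^(2^i) = x^I := by rw [hI]
    have hpow : ((x^(2^k)*x + x^(2^k) + 1) + γ*(x^(2^k)*x + x + 1))^(2^i)
        = (1 + β) * x ^ (I * K + I) + x ^ (I * K) + β * x ^ I + 1 + β := by
      rw [aux17_pow2 h2 i (x^(2^k)*x + x^(2^k) + 1) (γ*(x^(2^k)*x + x + 1)),
          aux17_pow2 h2 i (x^(2^k)*x + x^(2^k)) 1,
          aux17_pow2 h2 i (x^(2^k)*x) (x^(2^k)),
          mul_pow γ (x^(2^k)*x + x + 1) (2^i),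
          aux17_pow2 h2 i (x^(2^k)*x + x) 1,
          aux17_pow2 h2 i (x^(2^k)*x) x,
          one_pow, ha, hb, hc, hγI']
      ring
    rw [← hpow]
    constructor
    · intro h; exact pow_eq_zero_iff (n := 2^i) (by positivity) |>.mp h
    · intro h; rw [h]; exact zero_pow (by positivity)
  -- the set U and the map g
  set U : Set F := {w : F | w ^ (2^m + 1) = 1} with hUdef
  have hUfin : U.Finite := Set.toFinite U
  set g : F → F := fun w => (w^(2^k)*w + w^(2^k) + 1) / (w^(2^k)*w + w + 1) with hgdef
  -- nonvanishing of N and D on U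
  have hB : ∀ w : F, w ∈ U → w^(2^m) * w = 1 := by
    intro w hw; rw [← pow_succ]; exact hw
  have hw0 : ∀ w : F, w ∈ U → w ≠ 0 := by
    intro w hw h0
    have : (0:F) ^ (2^m+1) = 1 := h0 ▸ hw
    rw [zero_pow (by positivity)] at this
    exact zero_ne_one this
  have hA : ∀ w : F, w ∈ U → (w^(2^k)*w)^(2^m) * (w^(2^k)*w) = 1 := by
    intro w hw
    rw [← pow_succ, show w^(2^k)*w = w^(2^k+1) from (pow_succ w (2^k)).symm,
        ← pow_mul, mul_comm, pow_mul, hw, one_pow]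
  have hC : ∀ w : F, w ∈ U → (w^(2^k))^(2^m) * w^(2^k) = 1 := by
    intro w hw
    rw [pow_right_comm, ← mul_pow, hB w hw, one_pow]
  have hNfromD : ∀ w : F, w ∈ U →
      (w^(2^k)*w + w + 1)^(2^m) * (w^(2^k)*w) = w^(2^k)*w + w^(2^k) + 1 := by
    intro w hw
    rw [aux17_pow2 h2 m (w^(2^k)*w + w) 1, aux17_pow2 h2 m (w^(2^k)*w) w, one_pow]
    linear_combination hA w hw + w^(2^k) * hB w hw
  have hDfromN : ∀ w : F, w ∈ U →
      (w^(2^k)*w + w^(2^k) + 1)^(2^m) * (w^(2^k)*w) = w^(2^k)*w + w + 1 := by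
    intro w hw
    rw [aux17_pow2 h2 m (w^(2^k)*w + w^(2^k)) 1, aux17_pow2 h2 m (w^(2^k)*w) (w^(2^k)), one_pow]
    linear_combination hA w hw + w * hC w hw
  have hD0 : ∀ w : F, w ∈ U → w^(2^k)*w + w + 1 ≠ 0 := by
    intro w hw hD
    have hN : w^(2^k)*w + w^(2^k) + 1 = 0 := by
      rw [← hNfromD w hw, hD, zero_pow (by positivity : (2:ℕ)^m ≠ 0), zero_mul]
    have hwK : w^(2^k) = w := by linear_combination hN - hD
    have hw1 : w = 1 := aux17_one hgcd hw hwK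
    rw [hw1] at hD
    exact one_ne_zero (by linear_combination hD - h2)
  have hN0 : ∀ w : F, w ∈ U → w^(2^k)*w + w^(2^k) + 1 ≠ 0 := by
    intro w hw hN
    have hD : w^(2^k)*w + w + 1 = 0 := by
      rw [← hDfromN w hw, hN, zero_pow (by positivity : (2:ℕ)^m ≠ 0), zero_mul]
    exact hD0 w hw hD
  -- g maps U to U
  have hgU : ∀ w : F, w ∈ U → g w ∈ U := by
    intro w hw
    have hNDq : (w^(2^k)*w + w^(2^k) + 1)^(2^m+1) = (w^(2^k)*w + w + 1)^(2^m+1) := by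
      have h9 : (w^(2^k)*w + w^(2^k) + 1)^(2^m+1) * (w^(2^k)*w)
          = (w^(2^k)*w + w + 1)^(2^m+1) * (w^(2^k)*w) := by
        rw [pow_succ, pow_succ]
        linear_combination (w^(2^k)*w + w^(2^k) + 1) * hDfromN w hw
          - (w^(2^k)*w + w + 1) * hNfromD w hw
      exact mul_right_cancel₀ (by
        intro h0
        have := hA w hw
        rw [h0, mul_zero] at this
        exact zero_ne_one this) h9
    show g w ^ (2^m+1) = 1
    rw [hgdef]
    simp only
    rw [div_pow, hNDq, div_self (pow_ne_zero _ (hD0 w hw))]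
  -- characterization
  have hgγ : ∀ w : F, w ∈ U →
      (((w^(2^k)*w + w^(2^k) + 1) + γ*(w^(2^k)*w + w + 1) = 0) ↔ g w = γ) := by
    intro w hw
    rw [hgdef]
    simp only
    rw [div_eq_iff (hD0 w hw)]
    constructor
    · intro h; linear_combination h - (γ*(w^(2^k)*w + w + 1))*h2
    · intro h; linear_combination h + (γ*(w^(2^k)*w + w + 1))*h2
  -- injectivity
  have hinj : Set.InjOn g U := by
    intro a ha b hb hgab
    apply aux17_inj m k hm hk hgcd h2 a b ha hb
    rw [hgdef] at hgab
    simp only at hgab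
    exact (div_eq_div_iff (hD0 a ha) (hD0 b hb)).mp hgab
  -- surjectivity via counting
  have himg : g '' U = U := by
    apply Set.eq_of_subset_of_ncard_le
    · rintro t ⟨w, hw, rfl⟩
      exact hgU w hw
    · rw [Set.ncard_image_of_injOn hinj]
    · exact hUfin
  have hγmem : γ ∈ U := hγU
  rw [← himg] at hγmem
  obtain ⟨x₀, hx₀U, hgx₀⟩ := hγmem
  refine ⟨x₀, ⟨hx₀U, ?_⟩, ?_⟩
  · exact (hEq x₀).mpr ((hgγ x₀ hx₀U).mpr hgx₀)
  · rintro w ⟨hwU, hweq⟩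
    refine hinj hwU hx₀U ?_
    rw [hgx₀]
    exact (hgγ w hwU).mp ((hEq w).mp hweq)
end
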